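/- arXiv:1506.00467 — 6 statements merged into one kernel-verified Lean document; each statement's English description precedes it below -/
import Mathlib

section
/- For every integer d ≥ 3 there exist a positive integer N, an integral convex polytope P ⊂ ℝ^N of dimension d, and a polynomial p ∈ ℚ[X] of degree d such that p(n) = i(P,n) for every positive integer n, the coefficient of X in p is negative, and every other coefficient of p (the constant term and the coefficients of X^j for 2 ≤ j ≤ d) is positive. -/
open Polynomial Pointwise

/-- An integral convex polytope in `ℝ^N`: the convex hull of a nonempty finite set of
points with integer coordinates. -/
def IsIntegralPolytope {N : ℕ} (P : Set (Fin N → ℝ)) : Prop :=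
  ∃ V : Finset (Fin N → ℝ), V.Nonempty ∧
    (∀ v ∈ V, ∀ i, ∃ z : ℤ, v i = (z : ℝ)) ∧
    P = convexHull ℝ (V : Set (Fin N → ℝ))

/-- The dimension of a polytope: the dimension of its affine span. -/
noncomputable def polytopeDim {N : ℕ} (P : Set (Fin N → ℝ)) : ℕ :=
  Module.finrank ℝ (vectorSpan ℝ P)

/-- `latticeCount P n = #(nP ∩ ℤ^N)`, the number of lattice points of the dilation `nP`. -/
noncomputable def latticeCount {N : ℕ} (P : Set (Fin N → ℝ)) (n : ℕ) : ℕ :=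
  Set.ncard {x : Fin N → ℤ | (fun i => (x i : ℝ)) ∈ (n : ℝ) • P}

open Finset

/-!
The witness in dimension `d = 3 + k` is `P = (k + 1) T₁₈ × [0, 1]ᵏ`, where
`T_r = conv {0, e₁, e₂, (1, 1, r)}` is the Reeve tetrahedron. Lattice points of a product
multiply, so `i(P, n) = i(T₁₈, (k + 1) n) (n + 1)ᵏ`. Writing the last coordinate of a lattice point
of `N T_r` as `r q + s` with `0 ≤ s < r` and subtracting `q + [s ≠ 0]` from the first two
coordinates identifies these points with one copy of the lattice points of `N Δ₃` and `r - 1`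
copies of those of `(N - 2) Δ₃`, so `i(T_r, N) = C(N + 3, 3) + (r - 1) C(N + 1, 3)
= r/6 N³ + N² + (2 - r/6) N + 1`. For `r = 18` this is `q(N) = 3N³ + N² - N + 1`, and in
`q((k + 1) X) (X + 1)ᵏ` the linear coefficient is `-(k + 1) + k = -1`, while the others are
positive because `C(k, j - 1) ≤ k C(k, j - 2)`.
-/

lemma Nat.mul_le_mul_add_iff_of_lt {r a b s : ℕ} (hs : s < r) : r * a ≤ r * b + s ↔ a ≤ b := by
  constructor
  · intro h
    by_contra hab
    have : r * (b + 1) ≤ r * a := Nat.mul_le_mul_left r (by omega)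
    nlinarith
  · intro h
    nlinarith

lemma Nat.mul_add_le_mul_iff_of_lt {r q s x : ℕ} (hs : s < r) :
    r * q + s ≤ r * x ↔ q + min s 1 ≤ x := by
  rcases Nat.eq_zero_or_pos s with rfl | hs0
  · simpa using Nat.mul_le_mul_left_iff (show 0 < r by omega)
  · rw [show min s 1 = 1 by omega]
    constructor
    · intro h
      by_contra hqx
      have : r * x ≤ r * q := Nat.mul_le_mul_left r (by omega)
      omega
    · intro h
      have : r * (q + 1) ≤ r * x := Nat.mul_le_mul_left r h
      nlinarith

lemma Nat.choose_succ_le_mul_choose (n m : ℕ) : n.choose (m + 1) ≤ n * n.choose m :=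
  calc n.choose (m + 1) ≤ n.choose (m + 1) * (m + 1) := Nat.le_mul_of_pos_right _ m.succ_pos
    _ = n.choose m * (n - m) := Nat.choose_succ_right_eq n m
    _ ≤ n * n.choose m := by rw [mul_comm]; exact Nat.mul_le_mul_right _ (Nat.sub_le n m)

lemma Nat.cast_choose_three (n : ℕ) : (n.choose 3 : ℚ) = n * (n - 1) * (n - 2) / 6 := by
  induction n with
  | zero => simp
  | succ n ih =>
    rw [Nat.choose_succ_succ', Nat.cast_add, ih, Nat.cast_choose_two]
    push_cast
    ring

section VectorSpan

variable {R E F : Type*} [Ring R] [AddCommGroup E] [Module R E] [AddCommGroup F] [Module R F]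

lemma vectorSpan_image_eq_top (L : E ≃ₗ[R] F) {S : Set E} (hS : vectorSpan R S = ⊤) :
    vectorSpan R (L '' S) = ⊤ := by
  have := L.toLinearMap.toAffineMap.map_vectorSpan (s := S)
  rw [hS, Submodule.map_top] at this
  simpa using this.symm

lemma vectorSpan_convexHull [PartialOrder R] (S : Set E) :
    vectorSpan R (convexHull R S) = vectorSpan R S := by
  rw [← direction_affineSpan, affineSpan_convexHull, direction_affineSpan]

lemma vectorSpan_eq_top_of_single_mem {ι : Type*} [Finite ι] [DecidableEq ι] {S : Set (ι → R)}
    (h : ∀ i, Pi.single i 1 ∈ vectorSpan R S) : vectorSpan R S = ⊤ := by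
  rw [eq_top_iff, ← (Pi.basisFun R ι).span_eq, Submodule.span_le]
  rintro _ ⟨i, rfl⟩
  simpa using h i

end VectorSpan

lemma vectorSpan_smul_eq_top {K E : Type*} [Field K] [AddCommGroup E] [Module K E] {S : Set E}
    (hS : vectorSpan K S = ⊤) {a : K} (ha : a ≠ 0) : vectorSpan K (a • S) = ⊤ := by
  rw [← Set.image_smul]
  exact vectorSpan_image_eq_top (LinearEquiv.smulOfNeZero K E a ha) hS

lemma IsIntegralPolytope.nonempty {N : ℕ} {P : Set (Fin N → ℝ)} (hP : IsIntegralPolytope P) :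
    P.Nonempty := by
  obtain ⟨V, hV, -, rfl⟩ := hP
  exact convexHull_nonempty_iff.2 (coe_nonempty.2 hV)

lemma latticeCount_natCast_smul {N : ℕ} (P : Set (Fin N → ℝ)) (m t : ℕ) :
    latticeCount ((m : ℝ) • P) t = latticeCount P (t * m) := by
  rw [latticeCount, latticeCount, smul_smul, Nat.cast_mul]

lemma IsIntegralPolytope.natCast_smul {N : ℕ} {P : Set (Fin N → ℝ)} (hP : IsIntegralPolytope P)
    (m : ℕ) : IsIntegralPolytope ((m : ℝ) • P) := by
  obtain ⟨V, hV, hVint, rfl⟩ := hP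
  refine ⟨V.image ((m : ℝ) • ·), hV.image _, ?_, ?_⟩
  · simp only [Finset.mem_image]
    rintro _ ⟨v, hv, rfl⟩ i
    obtain ⟨z, hz⟩ := hVint v hv i
    exact ⟨m * z, by simp [hz]⟩
  · rw [coe_image, Set.image_smul, convexHull_smul]

lemma polytopeDim_of_vectorSpan_eq_top {N : ℕ} {P : Set (Fin N → ℝ)}
    (hP : vectorSpan ℝ P = ⊤) : polytopeDim P = N := by
  rw [polytopeDim, hP, finrank_top, Module.finrank_fin_fun]

def Fin.appendLinearEquiv (R M : Type*) [Semiring R] [AddCommMonoid M] [Module R M] (m n : ℕ) :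
    ((Fin m → M) × (Fin n → M)) ≃ₗ[R] (Fin (m + n) → M) where
  __ := Fin.appendEquiv m n
  map_add' p q := by
    ext i
    refine Fin.addCases (fun i => ?_) (fun i => ?_) i <;> simp
  map_smul' c p := by
    ext i
    refine Fin.addCases (fun i => ?_) (fun i => ?_) i <;> simp

def polytopeProd {m n : ℕ} (A : Set (Fin m → ℝ)) (B : Set (Fin n → ℝ)) : Set (Fin (m + n) → ℝ) :=
  Fin.appendLinearEquiv ℝ ℝ m n '' A ×ˢ B

lemma IsIntegralPolytope.prod {m n : ℕ} {A : Set (Fin m → ℝ)} {B : Set (Fin n → ℝ)}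
    (hA : IsIntegralPolytope A) (hB : IsIntegralPolytope B) :
    IsIntegralPolytope (polytopeProd A B) := by
  obtain ⟨VA, hVA, hVAint, rfl⟩ := hA
  obtain ⟨VB, hVB, hVBint, rfl⟩ := hB
  refine ⟨(VA ×ˢ VB).image (Fin.appendLinearEquiv ℝ ℝ m n), (hVA.product hVB).image _, ?_, ?_⟩
  · simp only [Finset.mem_image, Finset.mem_product]
    rintro _ ⟨⟨a, b⟩, ⟨ha, hb⟩, rfl⟩ i
    refine Fin.addCases (fun i => ?_) (fun i => ?_) i
    · simpa [Fin.appendLinearEquiv] using hVAint a ha i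
    · simpa [Fin.appendLinearEquiv] using hVBint b hb i
  · rw [polytopeProd, coe_image, coe_product, ← convexHull_prod]
    exact (Fin.appendLinearEquiv ℝ ℝ m n).toLinearMap.image_convexHull _

lemma latticeCount_prod {m n : ℕ} (A : Set (Fin m → ℝ)) (B : Set (Fin n → ℝ)) (t : ℕ) :
    latticeCount (polytopeProd A B) t = latticeCount A t * latticeCount B t := by
  have hpts : {x : Fin (m + n) → ℤ | (fun i => (x i : ℝ)) ∈ (t : ℝ) • polytopeProd A B} =
      Fin.appendEquiv m n '' ({x : Fin m → ℤ | (fun i => (x i : ℝ)) ∈ (t : ℝ) • A} ×ˢ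
        {x : Fin n → ℤ | (fun i => (x i : ℝ)) ∈ (t : ℝ) • B}) := by
    rw [polytopeProd, ← image_smul_set, Set.smul_set_prod, LinearEquiv.image_eq_preimage_symm,
      Equiv.image_eq_preimage_symm]
    rfl
  rw [latticeCount, hpts, Set.ncard_image_of_injective _ (Fin.appendEquiv m n).injective,
    Set.ncard_prod]
  rfl

lemma vectorSpan_polytopeProd {m n : ℕ} {A : Set (Fin m → ℝ)} {B : Set (Fin n → ℝ)}
    (hA : A.Nonempty) (hB : B.Nonempty) (hA' : vectorSpan ℝ A = ⊤) (hB' : vectorSpan ℝ B = ⊤) :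
    vectorSpan ℝ (polytopeProd A B) = ⊤ := by
  refine vectorSpan_image_eq_top _ ?_
  rw [vectorSpan_prod_eq hA hB, hA', hB', Submodule.prod_top]

def unitCube (k : ℕ) : Set (Fin k → ℝ) := Set.univ.pi fun _ => Set.Icc 0 1

lemma isIntegralPolytope_unitCube (k : ℕ) : IsIntegralPolytope (unitCube k) := by
  refine ⟨Fintype.piFinset fun _ => {0, 1}, ⟨0, by simp⟩, fun v hv i => ?_, ?_⟩
  · rcases (by simpa using Fintype.mem_piFinset.1 hv i : v i = 0 ∨ v i = 1) with h | h
    · exact ⟨0, by simp [h]⟩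
    · exact ⟨1, by simp [h]⟩
  · rw [Fintype.coe_piFinset, convexHull_pi]
    simp [unitCube, convexHull_pair, segment_eq_Icc]

lemma latticeCount_unitCube (k : ℕ) {n : ℕ} (hn : 0 < n) :
    latticeCount (unitCube k) n = (n + 1) ^ k := by
  have hpts : {x : Fin k → ℤ | (fun i => (x i : ℝ)) ∈ (n : ℝ) • unitCube k} =
      ↑(Fintype.piFinset fun _ : Fin k => Finset.Icc (0 : ℤ) n) := by
    ext x
    simp only [unitCube, Set.smul_set_pi₀ (show (n : ℝ) ≠ 0 by positivity), Set.mem_ofPred_eq,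
      Set.mem_pi, Set.mem_univ, true_implies, Pi.smul_apply,
      LinearOrderedField.smul_Icc (show (0 : ℝ) < n by positivity), mul_zero, mul_one,
      Set.mem_Icc, mem_coe, Fintype.mem_piFinset, Finset.mem_Icc]
    norm_cast
  rw [latticeCount, hpts, Set.ncard_coe_finset, Fintype.card_piFinset]
  simp

lemma vectorSpan_unitCube (k : ℕ) : vectorSpan ℝ (unitCube k) = ⊤ := by
  refine vectorSpan_eq_top_of_single_mem fun i => ?_
  have hmem : ∀ j : Fin k, Pi.single j (1 : ℝ) ∈ unitCube k := fun j i _ => by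
    by_cases h : i = j <;> simp [h]
  have h0 : (0 : Fin k → ℝ) ∈ unitCube k := fun i _ => by simp
  simpa using vsub_mem_vectorSpan ℝ (hmem i) h0

def simplexPoints (k m : ℕ) : Finset (Fin k → ℕ) :=
  (Fintype.piFinset fun _ => range (m + 1)).filter fun x => ∑ i, x i ≤ m

lemma mem_simplexPoints {k m : ℕ} {x : Fin k → ℕ} : x ∈ simplexPoints k m ↔ ∑ i, x i ≤ m := by
  refine ⟨fun h => (Finset.mem_filter.1 h).2, fun h => Finset.mem_filter.2 ⟨?_, h⟩⟩
  refine Fintype.mem_piFinset.2 fun i => Finset.mem_range_succ_iff.2 ?_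
  exact (Finset.single_le_sum (fun j _ => Nat.zero_le (x j)) (Finset.mem_univ i)).trans h

-- Points with vanishing first coordinate, and translates by `e₀` of points of the smaller dilate.
lemma card_simplexPoints_succ_succ (k m : ℕ) :
    #(simplexPoints (k + 1) (m + 1)) = #(simplexPoints k (m + 1)) + #(simplexPoints (k + 1) m) := by
  rw [← card_filter_add_card_filter_not (fun x : Fin (k + 1) → ℕ => x 0 = 0)]
  congr 1
  · refine card_nbij' Fin.tail (fun y => Fin.cons 0 y) ?_ ?_ ?_ ?_
    · intro x hx
      simp only [coe_filter, mem_simplexPoints, Set.mem_ofPred_eq, Fin.sum_univ_succ] at hx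
      simpa [mem_simplexPoints, Fin.tail] using hx.1.trans' (by omega)
    · intro y hy
      simp_all [mem_simplexPoints, Fin.sum_cons]
    · intro x hx
      simp only [coe_filter, Set.mem_ofPred_eq] at hx
      rw [← hx.2]
      exact Fin.cons_self_tail x
    · intro y _
      exact Fin.tail_cons _ _
  · refine card_nbij' (fun x => x - Pi.single 0 1) (fun x => x + Pi.single 0 1) ?_ ?_ ?_ ?_
    · intro x hx
      simp only [coe_filter, mem_simplexPoints, Set.mem_ofPred_eq, Fin.sum_univ_succ] at hx
      simp [mem_simplexPoints, Fin.sum_univ_succ]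
      omega
    · intro y hy
      simp_all [mem_simplexPoints, Fin.sum_univ_succ]
      omega
    · intro x hx
      simp only [coe_filter, Set.mem_ofPred_eq] at hx
      ext i
      refine Fin.cases ?_ (fun i => ?_) i <;> simp
      omega
    · intro y _
      simp

lemma card_simplexPoints (k m : ℕ) : #(simplexPoints k m) = (m + k).choose k := by
  induction k generalizing m with
  | zero => simp [simplexPoints]
  | succ k ihk =>
    induction m with
    | zero =>
      rw [zero_add, Nat.choose_self, card_eq_one]
      exact ⟨0, by ext x; simp [mem_simplexPoints, funext_iff]⟩
    | succ m ihm =>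
      rw [card_simplexPoints_succ_succ, ihk, ihm, show m + 1 + (k + 1) = (m + k + 1) + 1 by ring,
        Nat.choose_succ_succ']
      ring_nf

def reeveVertex (r : ℕ) : Fin 4 → Fin 3 → ℝ := ![0, ![1, 0, 0], ![0, 1, 0], ![1, 1, r]]

def reeveTetrahedron (r : ℕ) : Set (Fin 3 → ℝ) := convexHull ℝ (Set.range (reeveVertex r))

lemma isIntegralPolytope_reeveTetrahedron (r : ℕ) : IsIntegralPolytope (reeveTetrahedron r) := by
  refine ⟨univ.image (reeveVertex r), univ_nonempty.image _, ?_, by simp [reeveTetrahedron]⟩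
  simp only [Finset.mem_image, mem_univ, true_and]
  rintro _ ⟨j, rfl⟩ i
  fin_cases j <;> fin_cases i <;> simp [reeveVertex] <;>
    first | exact ⟨0, Int.cast_zero.symm⟩ | exact ⟨1, Int.cast_one.symm⟩ |
      exact ⟨r, (Int.cast_natCast r).symm⟩

lemma vectorSpan_reeveTetrahedron {r : ℕ} (hr : r ≠ 0) :
    vectorSpan ℝ (reeveTetrahedron r) = ⊤ := by
  rw [reeveTetrahedron, vectorSpan_convexHull]
  have hv : ∀ i j, reeveVertex r i - reeveVertex r j ∈ vectorSpan ℝ (Set.range (reeveVertex r)) :=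
    fun i j => vsub_mem_vectorSpan ℝ (Set.mem_range_self i) (Set.mem_range_self j)
  refine vectorSpan_eq_top_of_single_mem fun i => ?_
  fin_cases i
  · convert hv 1 0
    ext j; fin_cases j <;> simp [reeveVertex]
  · convert hv 2 0
    ext j; fin_cases j <;> simp [reeveVertex]
  · convert Submodule.smul_mem _ (r : ℝ)⁻¹ (sub_mem (hv 3 1) (hv 2 0))
    ext j; fin_cases j <;> simp [reeveVertex, hr]

lemma smul_reeveTetrahedron {r : ℕ} (hr : 0 < r) {t : ℝ} (ht : 0 < t) :
    t • reeveTetrahedron r = {w : Fin 3 → ℝ | 0 ≤ w 2 ∧ w 2 ≤ r * w 0 ∧ w 2 ≤ r * w 1 ∧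
      r * (w 0 + w 1) ≤ r * t + w 2} := by
  have hrt : (0 : ℝ) < r * t := by positivity
  rw [reeveTetrahedron, ← convexHull_smul, Set.smul_set_range]
  apply subset_antisymm
  · refine convexHull_min ?_ ?_
    · rintro _ ⟨j, rfl⟩
      fin_cases j <;> simp [reeveVertex, hrt.le]
      exact ⟨by positivity, by linarith, by linarith⟩
    · rintro x ⟨hx1, hx2, hx3, hx4⟩ y ⟨hy1, hy2, hy3, hy4⟩ a b ha hb hab
      simp only [Set.mem_ofPred_eq, Pi.add_apply, Pi.smul_apply, smul_eq_mul]
      refine ⟨?_, ?_, ?_, ?_⟩ <;> nlinarith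
  · rintro w ⟨hw1, hw2, hw3, hw4⟩
    let weight : Fin 4 → ℝ := ![(r * t - r * (w 0 + w 1) + w 2) / (r * t),
      (r * w 0 - w 2) / (r * t), (r * w 1 - w 2) / (r * t), w 2 / (r * t)]
    have hw : ∑ j, weight j • t • reeveVertex r j = w := by
      ext i
      fin_cases i <;> simp [Fin.sum_univ_four, weight, reeveVertex] <;> field_simp <;> ring
    rw [← hw]
    refine (convex_convexHull ℝ _).sum_mem (fun j _ => ?_) ?_
      (fun j _ => subset_convexHull ℝ _ (Set.mem_range_self j))
    · fin_cases j <;> simp only [weight] <;> simp <;> apply div_nonneg _ hrt.le <;> linarith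
    · simp only [Fin.sum_univ_four, weight]
      simp
      field_simp
      ring

def reeveLatticePoints (r N : ℕ) : Set (Fin 3 → ℕ) :=
  {p | p 2 ≤ r * p 0 ∧ p 2 ≤ r * p 1 ∧ r * (p 0 + p 1) ≤ r * N + p 2}

-- `min s 1` is the indicator of `s ≠ 0`.
def reeveParam (r : ℕ) (a : Σ _ : ℕ, Fin 3 → ℕ) : Fin 3 → ℕ :=
  ![a.2 0 + a.2 2 + min a.1 1, a.2 1 + a.2 2 + min a.1 1, r * a.2 2 + a.1]

def reeveIndex (r N : ℕ) : Finset (Σ _ : ℕ, Fin 3 → ℕ) :=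
  (range r).sigma fun s => (simplexPoints 3 N).filter fun x => ∑ i, x i + 2 * min s 1 ≤ N

lemma mem_reeveIndex {r N : ℕ} {a : Σ _ : ℕ, Fin 3 → ℕ} :
    a ∈ reeveIndex r N ↔ a.1 < r ∧ a.2 0 + a.2 1 + a.2 2 + 2 * min a.1 1 ≤ N := by
  simp only [reeveIndex, mem_sigma, mem_range, mem_filter, mem_simplexPoints, Fin.sum_univ_three]
  omega

lemma card_reeveIndex {r : ℕ} (hr : 0 < r) (N : ℕ) :
    #(reeveIndex r N) = (N + 3).choose 3 + (r - 1) * (N + 1).choose 3 := by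
  have hfiber : #((simplexPoints 3 N).filter fun x => ∑ i, x i + 2 ≤ N) = (N + 1).choose 3 := by
    rcases Nat.lt_or_ge N 2 with hN | hN
    · rw [Nat.choose_eq_zero_of_lt (by omega), card_eq_zero, filter_eq_empty_iff]
      omega
    · obtain ⟨M, rfl⟩ : ∃ M, N = M + 2 := ⟨N - 2, by omega⟩
      rw [← card_simplexPoints 3 M]
      congr 1
      ext x
      simp only [mem_filter, mem_simplexPoints]
      omega
  obtain ⟨r, rfl⟩ : ∃ r', r = r' + 1 := ⟨r - 1, by omega⟩
  have hmin : ∀ s : ℕ, min (s + 1) 1 = 1 := fun s => by omega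
  rw [reeveIndex, card_sigma, sum_range_succ']
  simp only [hmin, Nat.zero_min, mul_zero, add_zero, mul_one, hfiber, sum_const, card_range,
    smul_eq_mul]
  rw [filter_true_of_mem fun x hx => mem_simplexPoints.1 hx, card_simplexPoints,
    Nat.add_sub_cancel]
  ring

lemma reeveParam_mem_iff {r N : ℕ} {a : Σ _ : ℕ, Fin 3 → ℕ} (hs : a.1 < r) :
    reeveParam r a ∈ reeveLatticePoints r N ↔ a.2 0 + a.2 1 + a.2 2 + 2 * min a.1 1 ≤ N := by
  simp only [reeveLatticePoints, reeveParam, Set.mem_ofPred_eq, Matrix.cons_val]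
  rw [Nat.mul_add_le_mul_iff_of_lt hs, Nat.mul_add_le_mul_iff_of_lt hs,
    show r * N + (r * a.2 2 + a.1) = r * (N + a.2 2) + a.1 by ring,
    Nat.mul_le_mul_add_iff_of_lt hs]
  omega

lemma reeveParam_injOn (r N : ℕ) : Set.InjOn (reeveParam r) (reeveIndex r N) := by
  rintro ⟨s, x⟩ ha ⟨s', x'⟩ hb h
  have hs := (mem_reeveIndex.1 ha).1
  have hs' := (mem_reeveIndex.1 hb).1
  have h0 := congrFun h 0
  have h1 := congrFun h 1
  have h2 := congrFun h 2
  simp only [reeveParam, Matrix.cons_val] at h0 h1 h2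
  have hq : x 2 = x' 2 := by
    have := congrArg (· / r) h2
    rwa [Nat.mul_add_div (by omega), Nat.mul_add_div (by omega), Nat.div_eq_of_lt hs,
      Nat.div_eq_of_lt hs', add_zero, add_zero] at this
  obtain rfl : s = s' := by rw [hq] at h2; omega
  refine Sigma.ext rfl (heq_of_eq (funext fun i => ?_))
  fin_cases i <;> simp <;> omega

lemma image_reeveParam {r : ℕ} (hr : 0 < r) (N : ℕ) :
    reeveParam r '' reeveIndex r N = reeveLatticePoints r N := by
  apply subset_antisymm
  · rintro _ ⟨a, ha, rfl⟩
    rw [mem_coe, mem_reeveIndex] at ha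
    exact (reeveParam_mem_iff ha.1).2 ha.2
  · rintro p hp
    set q := p 2 / r
    set s := p 2 % r
    have hs : s < r := Nat.mod_lt _ hr
    have hp2 : r * q + s = p 2 := Nat.div_add_mod _ _
    obtain ⟨h0, h1, h2⟩ := hp
    rw [← hp2, Nat.mul_add_le_mul_iff_of_lt hs] at h0 h1
    rw [← hp2, show r * N + (r * q + s) = r * (N + q) + s by ring,
      Nat.mul_le_mul_add_iff_of_lt hs] at h2
    refine ⟨⟨s, ![p 0 - q - min s 1, p 1 - q - min s 1, q]⟩, ?_, ?_⟩
    · rw [mem_coe, mem_reeveIndex]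
      simp only [Matrix.cons_val]
      omega
    · ext i
      fin_cases i <;> simp [reeveParam] <;> omega

lemma ncard_reeveLatticePoints {r : ℕ} (hr : 0 < r) (N : ℕ) :
    (reeveLatticePoints r N).ncard = (N + 3).choose 3 + (r - 1) * (N + 1).choose 3 := by
  rw [← image_reeveParam hr, (reeveParam_injOn r N).ncard_image,
    Set.ncard_coe_finset, card_reeveIndex hr]

lemma latticeCount_reeveTetrahedron_eq_ncard {r N : ℕ} (hr : 0 < r) (hN : 0 < N) :
    latticeCount (reeveTetrahedron r) N = (reeveLatticePoints r N).ncard := by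
  have hpts : {x : Fin 3 → ℤ | (fun i => (x i : ℝ)) ∈ (N : ℝ) • reeveTetrahedron r} =
      (fun p i => (p i : ℤ)) '' reeveLatticePoints r N := by
    rw [smul_reeveTetrahedron hr (by exact_mod_cast hN)]
    ext x
    simp only [Set.mem_ofPred_eq, Set.mem_image, reeveLatticePoints]
    constructor
    · rintro ⟨h1, h2, h3, h4⟩
      have hx : 0 ≤ x 2 ∧ x 2 ≤ r * x 0 ∧ x 2 ≤ r * x 1 ∧ r * (x 0 + x 1) ≤ r * N + x 2 :=
        ⟨by exact_mod_cast h1, by exact_mod_cast h2, by exact_mod_cast h3, by exact_mod_cast h4⟩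
      have hnonneg : ∀ i, 0 ≤ x i := by
        intro i
        fin_cases i <;> simp <;> nlinarith
      lift x to Fin 3 → ℕ using hnonneg
      obtain ⟨-, h2, h3, h4⟩ := hx
      beta_reduce at h2 h3 h4
      exact ⟨x, ⟨by exact_mod_cast h2, by exact_mod_cast h3, by exact_mod_cast h4⟩, rfl⟩
    · rintro ⟨p, ⟨h1, h2, h3⟩, rfl⟩
      beta_reduce
      exact ⟨by positivity, by exact_mod_cast h1, by exact_mod_cast h2, by exact_mod_cast h3⟩
  rw [latticeCount, hpts]
  exact Set.ncard_image_of_injective _ fun p q h => funext fun i => by exact_mod_cast congrFun h i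

theorem latticeCount_reeveTetrahedron {r N : ℕ} (hr : 0 < r) (hN : 0 < N) :
    (latticeCount (reeveTetrahedron r) N : ℚ) = r / 6 * N ^ 3 + N ^ 2 + (2 - r / 6) * N + 1 := by
  rw [latticeCount_reeveTetrahedron_eq_ncard hr hN, ncard_reeveLatticePoints hr, Nat.cast_add,
    Nat.cast_mul, Nat.cast_sub hr, Nat.cast_choose_three, Nat.cast_choose_three]
  push_cast
  ring

/-- `q((k + 1) X) (X + 1)^k`, where `q = 3X³ + X² - X + 1` is the Ehrhart polynomial of `T₁₈`. -/
noncomputable def witnessPoly (k : ℕ) : ℚ[X] :=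
  (C (3 * ((k : ℚ) + 1) ^ 3) * X ^ 3 + C (((k : ℚ) + 1) ^ 2) * X ^ 2 - C ((k : ℚ) + 1) * X + 1) *
    (X + 1) ^ k

lemma eval_witnessPoly (k : ℕ) (x : ℚ) : (witnessPoly k).eval x =
    (3 * ((k + 1) * x) ^ 3 + ((k + 1) * x) ^ 2 - (k + 1) * x + 1) * (x + 1) ^ k := by
  simp only [witnessPoly, eval_mul, eval_add, eval_sub, eval_pow, eval_C, eval_X, eval_one]
  ring

lemma coeff_witnessPoly (k j : ℕ) : (witnessPoly k).coeff j =
    3 * (k + 1) ^ 3 * (if 3 ≤ j then (k.choose (j - 3) : ℚ) else 0) +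
      (k + 1) ^ 2 * (if 2 ≤ j then (k.choose (j - 2) : ℚ) else 0) -
      (k + 1) * (if 1 ≤ j then (k.choose (j - 1) : ℚ) else 0) + k.choose j := by
  have h : witnessPoly k = C (3 * ((k : ℚ) + 1) ^ 3) * (X ^ 3 * (X + 1) ^ k) +
      C (((k : ℚ) + 1) ^ 2) * (X ^ 2 * (X + 1) ^ k) - C ((k : ℚ) + 1) * (X ^ 1 * (X + 1) ^ k) +
      (X + 1) ^ k := by
    rw [witnessPoly]; ring
  rw [h]
  simp only [coeff_add, coeff_sub, coeff_C_mul, coeff_X_pow_mul', coeff_X_add_one_pow]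

lemma natDegree_witnessPoly (k : ℕ) : (witnessPoly k).natDegree = 3 + k := by
  have hcubic : (C (3 * ((k : ℚ) + 1) ^ 3) * X ^ 3 + C (((k : ℚ) + 1) ^ 2) * X ^ 2 -
      C ((k : ℚ) + 1) * X + 1).natDegree ≤ 3 := by
    compute_degree
  have hpow : ((X + 1 : ℚ[X]) ^ k).natDegree ≤ k := by
    compute_degree
  refine natDegree_eq_of_le_of_coeff_ne_zero (natDegree_mul_le.trans (add_le_add hcubic hpow)) ?_
  rw [coeff_witnessPoly]
  simp [Nat.choose_eq_zero_of_lt]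
  positivity

lemma coeff_one_witnessPoly (k : ℕ) : (witnessPoly k).coeff 1 = -1 := by
  rw [coeff_witnessPoly]
  simp

lemma coeff_witnessPoly_pos {k j : ℕ} (hj : j ≤ 3 + k) (hj1 : j ≠ 1) :
    0 < (witnessPoly k).coeff j := by
  rw [coeff_witnessPoly]
  match j, hj1 with
  | 0, _ => simp
  | 2, _ =>
    simp
    nlinarith [(Nat.cast_nonneg (k.choose 2) : (0 : ℚ) ≤ _)]
  | m + 3, _ =>
    have hm : (1 : ℚ) ≤ k.choose m := by exact_mod_cast Nat.choose_pos (by omega)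
    have hstep : (k.choose (m + 2) : ℚ) ≤ k * k.choose (m + 1) := by
      exact_mod_cast Nat.choose_succ_le_mul_choose k (m + 1)
    have hB : (0 : ℚ) ≤ k.choose (m + 1) := Nat.cast_nonneg _
    have hlin : ((k : ℚ) + 1) * k.choose (m + 2) ≤ ((k : ℚ) + 1) ^ 2 * k.choose (m + 1) :=
      calc ((k : ℚ) + 1) * k.choose (m + 2) ≤ ((k : ℚ) + 1) * (k * k.choose (m + 1)) :=
            mul_le_mul_of_nonneg_left hstep (by positivity)
        _ ≤ ((k : ℚ) + 1) ^ 2 * k.choose (m + 1) := by nlinarith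
    have hcubic : (0 : ℚ) < 3 * ((k : ℚ) + 1) ^ 3 * k.choose m := by positivity
    simp only [show 3 ≤ m + 3 by omega, show 2 ≤ m + 3 by omega, show 1 ≤ m + 3 by omega,
      if_true, show m + 3 - 3 = m by omega, show m + 3 - 2 = m + 1 by omega,
      show m + 3 - 1 = m + 2 by omega]
    linarith [(Nat.cast_nonneg (k.choose (m + 3)) : (0 : ℚ) ≤ _)]

noncomputable def witnessPolytope (k : ℕ) : Set (Fin (3 + k) → ℝ) :=
  polytopeProd (((k + 1 : ℕ) : ℝ) • reeveTetrahedron 18) (unitCube k)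

lemma isIntegralPolytope_witnessPolytope (k : ℕ) : IsIntegralPolytope (witnessPolytope k) :=
  ((isIntegralPolytope_reeveTetrahedron 18).natCast_smul _).prod (isIntegralPolytope_unitCube k)

lemma polytopeDim_witnessPolytope (k : ℕ) : polytopeDim (witnessPolytope k) = 3 + k :=
  polytopeDim_of_vectorSpan_eq_top <| vectorSpan_polytopeProd
    ((isIntegralPolytope_reeveTetrahedron 18).natCast_smul _).nonempty
    (isIntegralPolytope_unitCube k).nonempty
    (vectorSpan_smul_eq_top (vectorSpan_reeveTetrahedron (by norm_num)) (by positivity))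
    (vectorSpan_unitCube k)

lemma latticeCount_witnessPolytope (k : ℕ) {n : ℕ} (hn : 0 < n) :
    (latticeCount (witnessPolytope k) n : ℚ) = (witnessPoly k).eval (n : ℚ) := by
  rw [witnessPolytope, latticeCount_prod, latticeCount_natCast_smul, latticeCount_unitCube k hn,
    Nat.cast_mul, latticeCount_reeveTetrahedron (by norm_num) (by positivity), eval_witnessPoly]
  push_cast
  ring

theorem ehrhart_linear_coefficient_negative (d : ℕ) (hd : 3 ≤ d) :
    ∃ (N : ℕ) (P : Set (Fin N → ℝ)) (p : Polynomial ℚ),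
      0 < N ∧ IsIntegralPolytope P ∧ polytopeDim P = d ∧
      p.natDegree = d ∧
      (∀ n : ℕ, 0 < n → p.eval (n : ℚ) = (latticeCount P n : ℚ)) ∧
      p.coeff 1 < 0 ∧
      (∀ j : ℕ, j ≤ d → j ≠ 1 → 0 < p.coeff j) := by
  obtain ⟨k, rfl⟩ : ∃ k, d = 3 + k := ⟨d - 3, by omega⟩
  exact ⟨3 + k, witnessPolytope k, witnessPoly k, by omega, isIntegralPolytope_witnessPolytope k,
    polytopeDim_witnessPolytope k, natDegree_witnessPoly k,
    fun n hn => (latticeCount_witnessPolytope k hn).symm, by rw [coeff_one_witnessPoly]; norm_num,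
    fun j hj hj1 => coeff_witnessPoly_pos hj hj1⟩
end

section
/- Let d ≥ 4 be an integer and for a positive integer m define the polynomial F_m(X) = ((d−3)X + 1)^{d−3} · ((m/6)X³ + X² + ((12−m)/6)X + 1) ∈ ℚ[X]. Then there exists a positive integer M such that for every integer m ≥ M, the coefficient of X^j in F_m is negative for every j with 1 ≤ j ≤ d−2. -/
open Polynomial Filter

/-!
Write `n = d - 3` and `P = (nX + 1)^n`, whose coefficients `b_k = C(n, k) n^k` are positive for
`k ≤ n`, nondecreasing up to `k = n` and strictly increasing up to `k = n - 1`. Then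
`F_m = P (X + 1)^2 + (m/6) P (X^3 - X)`, and the coefficient of `X^j` in `P (X^3 - X)` is
`b_{j-3} - b_{j-1} < 0` for `1 ≤ j ≤ n + 1`. So each of these finitely many coefficients of
`F_m` is affine in `m` with negative slope, hence negative for large `m`.
-/

lemma coeff_C_mul_X_add_one_pow {R : Type*} [CommSemiring R] (a : R) (n k : ℕ) :
    ((C a * X + 1) ^ n).coeff k = n.choose k * a ^ k := by
  have : (C a * X + 1) ^ n = ((X + 1) ^ n).comp (C a * X) := by
    rw [pow_comp, add_comp, X_comp, one_comp]
  rw [this, comp_C_mul_X_coeff, coeff_X_add_one_pow]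

section
variable {R : Type*} [CommSemiring R] [PartialOrder R] [IsStrictOrderedRing R] {n k : ℕ} {a : R}

lemma choose_mul_pow_mul_sub_le (ha : (n : R) ≤ a) (k : ℕ) :
    (n.choose k * a ^ k : R) * (n - k : ℕ) ≤ n.choose (k + 1) * a ^ (k + 1) := by
  have ha0 : 0 ≤ a := (Nat.cast_nonneg n).trans ha
  have h := congrArg (Nat.cast (R := R)) (Nat.choose_succ_right_eq n k)
  push_cast at h
  calc (n.choose k * a ^ k : R) * (n - k : ℕ) = n.choose (k + 1) * (k + 1) * a ^ k := by
        rw [h]; ring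
    _ ≤ n.choose (k + 1) * a * a ^ k := by
        rcases Nat.lt_or_ge n (k + 1) with hn | hn
        · simp [Nat.choose_eq_zero_of_lt hn]
        · gcongr
          exact le_trans (by exact_mod_cast hn) ha
    _ = n.choose (k + 1) * a ^ (k + 1) := by ring

lemma choose_mul_pow_pos (ha : (n : R) ≤ a) (hk : k ≤ n) : 0 < (n.choose k * a ^ k : R) := by
  rcases k.eq_zero_or_pos with rfl | hk0
  · simp
  · have hn : (0 : R) < n := by exact_mod_cast hk0.trans_le hk
    exact mul_pos (by exact_mod_cast Nat.choose_pos hk) (pow_pos (hn.trans_le ha) k)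

lemma choose_mul_pow_le_succ (ha : (n : R) ≤ a) (hk : k < n) :
    (n.choose k * a ^ k : R) ≤ n.choose (k + 1) * a ^ (k + 1) :=
  (le_mul_of_one_le_right (choose_mul_pow_pos ha hk.le).le
    (by exact_mod_cast (by omega : 1 ≤ n - k))).trans (choose_mul_pow_mul_sub_le ha k)

lemma choose_mul_pow_lt_succ (ha : (n : R) ≤ a) (hk : k + 1 < n) :
    (n.choose k * a ^ k : R) < n.choose (k + 1) * a ^ (k + 1) :=
  (lt_mul_of_one_lt_right (choose_mul_pow_pos ha (by omega))
    (by exact_mod_cast (by omega : 1 < n - k))).trans_le (choose_mul_pow_mul_sub_le ha k)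

end

lemma coeff_C_mul_X_add_one_pow_mul_X_pow_three_sub_X_neg {R : Type*} [CommRing R]
    [PartialOrder R] [IsStrictOrderedRing R] {n j : ℕ} {a : R} (ha : (n : R) ≤ a) (hj : 1 ≤ j)
    (hjn : j ≤ n + 1) :
    ((C a * X + 1) ^ n * (X ^ 3 - X)).coeff j < 0 := by
  obtain ⟨i, rfl⟩ : ∃ i, j = i + 1 := ⟨j - 1, by omega⟩
  rw [mul_sub, coeff_sub, coeff_mul_X, coeff_mul_X_pow', sub_neg]
  simp only [coeff_C_mul_X_add_one_pow]
  rcases i with _ | _ | k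
  · simp
  · simpa using choose_mul_pow_pos (k := 1) ha (by omega)
  · rw [if_pos (by omega), show k + 2 + 1 - 3 = k by omega]
    exact (choose_mul_pow_lt_succ ha (by omega)).trans_le (choose_mul_pow_le_succ ha (by omega))

lemma eventually_add_natCast_mul_neg {K : Type*} [Field K] [LinearOrder K]
    [IsStrictOrderedRing K] [Archimedean K] (t : K) {s : K} (hs : s < 0) :
    ∀ᶠ m : ℕ in atTop, t + m * s < 0 :=
  (tendsto_atBot_add_const_left _ t
    (tendsto_natCast_atTop_atTop.atTop_mul_const_of_neg hs)).eventually_lt_atBot 0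

theorem middle_coefficients_negative_for_large_m (d : ℕ) (hd : 4 ≤ d) :
    ∃ M : ℕ, 0 < M ∧ ∀ m : ℕ, M ≤ m →
      ∀ j : ℕ, 1 ≤ j → j ≤ d - 2 →
        ((C ((d : ℚ) - 3) * X + 1) ^ (d - 3) *
          (C ((m : ℚ) / 6) * X ^ 3 + X ^ 2 + C ((12 - (m : ℚ)) / 6) * X + 1)).coeff j < 0 := by
  set P := (C ((d : ℚ) - 3) * X + 1) ^ (d - 3)
  have ha : ((d - 3 : ℕ) : ℚ) ≤ (d : ℚ) - 3 := by rw [Nat.cast_sub (by omega)]; norm_num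
  have hsplit : ∀ m : ℕ, C ((m : ℚ) / 6) * X ^ 3 + X ^ 2 + C ((12 - (m : ℚ)) / 6) * X + 1 =
      (X + 1) ^ 2 + C ((m : ℚ) / 6) * (X ^ 3 - X) := fun m => by
    rw [show (12 - (m : ℚ)) / 6 = 2 - m / 6 by ring, C_sub, C_ofNat]; ring
  have hev : ∀ᶠ m : ℕ in atTop, ∀ j ∈ Finset.Icc 1 (d - 2),
      (P * (C ((m : ℚ) / 6) * X ^ 3 + X ^ 2 + C ((12 - (m : ℚ)) / 6) * X + 1)).coeff j < 0 := by
    refine (eventually_all_finset _).2 fun j hj => ?_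
    have hs := coeff_C_mul_X_add_one_pow_mul_X_pow_three_sub_X_neg ha (Finset.mem_Icc.1 hj).1
      (by have := (Finset.mem_Icc.1 hj).2; omega)
    filter_upwards [eventually_add_natCast_mul_neg ((P * (X + 1) ^ 2).coeff j)
      (div_neg_of_neg_of_pos hs (by norm_num : (0 : ℚ) < 6))] with m hm
    rw [hsplit, mul_add, coeff_add, mul_left_comm, coeff_C_mul]
    linarith
  obtain ⟨M, hM⟩ := eventually_atTop.1 hev
  exact ⟨M + 1, M.succ_pos, fun m hm j hj hjd =>
    hM m (by omega) j (Finset.mem_Icc.2 ⟨hj, hjd⟩)⟩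
end

section
/- Let P = conv{(0,0,0,0,0), e₁, e₂, e₃, e₄, e₄ + e₅, e₁ + 50e₄ + 51e₅} ⊂ ℝ⁵, where e_i denotes the i-th standard unit vector of ℝ⁵. Then for every positive integer n, the number of lattice points in nP equals (13/30)n⁵ + (55/24)n⁴ + (37/12)n³ + (5/24)n² − (1/60)n + 1. -/
open Pointwise

open Finset Pointwise
set_option maxRecDepth 10000
set_option maxHeartbeats 1000000
set_option linter.unusedTactic false
set_option linter.unusedVariables false

lemma S1 (K : ℕ) (f : ℕ → ℚ) (c0 c1 c2 c3 c4 : ℚ)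
    (hf : ∀ k ∈ Finset.range (K+1), f k = c0 + c1*k + c2*k^2 + c3*k^3 + c4*k^4) :
    ∑ k ∈ Finset.range (K+1), f k
      = c0*(K+1) + c1*(K*(K+1)/2) + c2*((K:ℚ)*(K+1)*(2*K+1)/6)
        + c3*((K:ℚ)^2*(K+1)^2/4) + c4*((K:ℚ)*(K+1)*(2*K+1)*(3*(K:ℚ)^2+3*K-1)/30) := by
  induction K with
  | zero => rw [Finset.sum_range_one, hf 0 (by simp)]; push_cast; ring
  | succ K ih =>
    rw [Finset.sum_range_succ, ih (fun k hk => hf k (by simp only [Finset.mem_range] at hk ⊢; omega)),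
      hf (K+1) (by simp)]
    push_cast; ring

lemma quadE (M m : ℕ) (hm : M = 2*m) (c0 cx cy ca cb : ℚ) (f : ℕ → ℕ → ℕ → ℕ → ℚ)
    (hf : ∀ x ∈ range (M/2+1), ∀ y ∈ range (M-2*x+1), ∀ a ∈ range (M-2*x-y+1),
      ∀ b ∈ range (M-2*x-y-a+1), f x y a b = c0+cx*x+cy*y+ca*a+cb*b) :
    (∑ x ∈ range (M/2+1), ∑ y ∈ range (M-2*x+1), ∑ a ∈ range (M-2*x-y+1),
      ∑ b ∈ range (M-2*x-y-a+1), f x y a b)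
    = 1*c0 + (8/15)*(m:ℚ)*cb + (8/15)*(m:ℚ)*ca + (8/15)*(m:ℚ)*cy + (-1/15)*(m:ℚ)*cx + (7/2)*(m:ℚ)*c0 + (5/3)*(m:ℚ)^2*cb + (5/3)*(m:ℚ)^2*ca + (5/3)*(m:ℚ)^2*cy + (1/6)*(m:ℚ)^2*cx + (25/6)*(m:ℚ)^2*c0 + (11/6)*(m:ℚ)^3*cb + (11/6)*(m:ℚ)^3*ca + (11/6)*(m:ℚ)^3*cy + (1/2)*(m:ℚ)^3*cx + 2*(m:ℚ)^3*c0 + (5/6)*(m:ℚ)^4*cb + (5/6)*(m:ℚ)^4*ca + (5/6)*(m:ℚ)^4*cy + (1/3)*(m:ℚ)^4*cx + (1/3)*(m:ℚ)^4*c0 + (2/15)*(m:ℚ)^5*cb + (2/15)*(m:ℚ)^5*ca + (2/15)*(m:ℚ)^5*cy + (1/15)*(m:ℚ)^5*cx := by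
  subst hm
  have h2 : (2*m)/2 = m := by omega
  rw [h2] at hf ⊢
  have Hb : ∀ x ∈ range (m+1), ∀ y ∈ range (2*m-2*x+1), ∀ a ∈ range (2*m-2*x-y+1),
      (∑ b ∈ range (2*m-2*x-y-a+1), f x y a b)
      = (1*c0 + (-1/2)*(y:ℚ)*cb + 1*(y:ℚ)*cy + (-1)*(y:ℚ)*c0 + (1/2)*(y:ℚ)^2*cb + (-1)*(y:ℚ)^2*cy + (-1)*(x:ℚ)*cb + 1*(x:ℚ)*cx + (-2)*(x:ℚ)*c0 + 2*(x:ℚ)*(y:ℚ)*cb + (-2)*(x:ℚ)*(y:ℚ)*cy + (-1)*(x:ℚ)*(y:ℚ)*cx + 2*(x:ℚ)^2*cb + (-2)*(x:ℚ)^2*cx + 1*(m:ℚ)*cb + 2*(m:ℚ)*c0 + (-2)*(m:ℚ)*(y:ℚ)*cb + 2*(m:ℚ)*(y:ℚ)*cy + (-4)*(m:ℚ)*(x:ℚ)*cb + 2*(m:ℚ)*(x:ℚ)*cx + 2*(m:ℚ)^2*cb) + ((-1/2)*cb + 1*ca + (-1)*c0 + 1*(y:ℚ)*cb + (-1)*(y:ℚ)*ca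 + (-1)*(y:ℚ)*cy + 2*(x:ℚ)*cb + (-2)*(x:ℚ)*ca + (-1)*(x:ℚ)*cx + (-2)*(m:ℚ)*cb + 2*(m:ℚ)*ca)*(a:ℚ) + ((1/2)*cb + (-1)*ca)*(a:ℚ)^2 := by
    intro x hx y hy a ha
    refine (S1 _ _ (c0+cx*x+cy*y+ca*a) cb 0 0 0 ?_).trans ?_
    · intro b hb; rw [hf x hx y hy a ha b hb]; ring
    · rw [show 2*m-2*x-y-a = 2*m-(2*x+y+a) from by omega,
        Nat.cast_sub (by simp only [Finset.mem_range] at hx hy ha; omega)]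
      push_cast; ring
  have Ha : ∀ x ∈ range (m+1), ∀ y ∈ range (2*m-2*x+1),
      (∑ a ∈ range (2*m-2*x-y+1), ∑ b ∈ range (2*m-2*x-y-a+1), f x y a b)
      = (1*c0 + (-2/3)*(x:ℚ)*cb + (-2/3)*(x:ℚ)*ca + 1*(x:ℚ)*cx + (-3)*(x:ℚ)*c0 + 2*(x:ℚ)^2*cb + 2*(x:ℚ)^2*ca + (-3)*(x:ℚ)^2*cx + 2*(x:ℚ)^2*c0 + (-4/3)*(x:ℚ)^3*cb + (-4/3)*(x:ℚ)^3*ca + 2*(x:ℚ)^3*cx + (2/3)*(m:ℚ)*cb + (2/3)*(m:ℚ)*ca + 3*(m:ℚ)*c0 + (-4)*(m:ℚ)*(x:ℚ)*cb + (-4)*(m:ℚ)*(x:ℚ)*ca + 3*(m:ℚ)*(x:ℚ)*cx + (-4)*(m:ℚ)*(x:ℚ)*c0 + 4*(m:ℚ)*(x:ℚ)^2*cb + 4*(m:ℚ)*(x:ℚ)^2*ca + (-4)*(m:ℚ)*(x:ℚ)^2*cx + 2*(m:ℚ)^2*cb + 2*(m:ℚ)^2*ca + 2*(m:ℚ)^2*c0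 + (-4)*(m:ℚ)^2*(x:ℚ)*cb + (-4)*(m:ℚ)^2*(x:ℚ)*ca + 2*(m:ℚ)^2*(x:ℚ)*cx + (4/3)*(m:ℚ)^3*cb + (4/3)*(m:ℚ)^3*ca) + ((-1/3)*cb + (-1/3)*ca + 1*cy + (-3/2)*c0 + 2*(x:ℚ)*cb + 2*(x:ℚ)*ca + (-3)*(x:ℚ)*cy + (-3/2)*(x:ℚ)*cx + 2*(x:ℚ)*c0 + (-2)*(x:ℚ)^2*cb + (-2)*(x:ℚ)^2*ca + 2*(x:ℚ)^2*cy + 2*(x:ℚ)^2*cx + (-2)*(m:ℚ)*cb + (-2)*(m:ℚ)*ca + 3*(m:ℚ)*cy + (-2)*(m:ℚ)*c0 + 4*(m:ℚ)*(x:ℚ)*cb + 4*(m:ℚ)*(x:ℚ)*ca + (-4)*(m:ℚ)*(x:ℚ)*cy + (-2)*(m:ℚ)*(x:ℚ)*cx + (-2)*(m:ℚ)^2*cb + (-2)*(m:ℚ)^2*ca + 2*(m:ℚ)^2*cy)*(y:ℚ) + ((1/2)*cb + (1/2)*ca + (-3/2)*cy + (1/2)*c0 + (-1)*(x:ℚ)*cb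 + (-1)*(x:ℚ)*ca + 2*(x:ℚ)*cy + (1/2)*(x:ℚ)*cx + 1*(m:ℚ)*cb + 1*(m:ℚ)*ca + (-2)*(m:ℚ)*cy)*(y:ℚ)^2 + ((-1/6)*cb + (-1/6)*ca + (1/2)*cy)*(y:ℚ)^3 := by
    intro x hx y hy
    refine (S1 _ _ (1*c0 + (-1/2)*(y:ℚ)*cb + 1*(y:ℚ)*cy + (-1)*(y:ℚ)*c0 + (1/2)*(y:ℚ)^2*cb + (-1)*(y:ℚ)^2*cy + (-1)*(x:ℚ)*cb + 1*(x:ℚ)*cx + (-2)*(x:ℚ)*c0 + 2*(x:ℚ)*(y:ℚ)*cb + (-2)*(x:ℚ)*(y:ℚ)*cy + (-1)*(x:ℚ)*(y:ℚ)*cx + 2*(x:ℚ)^2*cb + (-2)*(x:ℚ)^2*cx + 1*(m:ℚ)*cb + 2*(m:ℚ)*c0 + (-2)*(m:ℚ)*(y:ℚ)*cb + 2*(m:ℚ)*(y:ℚ)*cy + (-4)*(m:ℚ)*(x:ℚ)*cb + 2*(m:ℚ)*(x:ℚ)*cx + 2*(m:ℚ)^2*cb) ((-1/2)*cb + 1*ca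 + (-1)*c0 + 1*(y:ℚ)*cb + (-1)*(y:ℚ)*ca + (-1)*(y:ℚ)*cy + 2*(x:ℚ)*cb + (-2)*(x:ℚ)*ca + (-1)*(x:ℚ)*cx + (-2)*(m:ℚ)*cb + 2*(m:ℚ)*ca) ((1/2)*cb + (-1)*ca) 0 0 ?_).trans ?_
    · intro a ha; rw [Hb x hx y hy a ha]; ring
    · rw [show 2*m-2*x-y = 2*m-(2*x+y) from by omega,
        Nat.cast_sub (by simp only [Finset.mem_range] at hx hy; omega)]
      push_cast; ring
  have Hy : ∀ x ∈ range (m+1),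
      (∑ y ∈ range (2*m-2*x+1), ∑ a ∈ range (2*m-2*x-y+1), ∑ b ∈ range (2*m-2*x-y-a+1), f x y a b)
      = (1*c0 + (1/2)*(m:ℚ)*cb + (1/2)*(m:ℚ)*ca + (1/2)*(m:ℚ)*cy + (11/3)*(m:ℚ)*c0 + (11/6)*(m:ℚ)^2*cb + (11/6)*(m:ℚ)^2*ca + (11/6)*(m:ℚ)^2*cy + 4*(m:ℚ)^2*c0 + 2*(m:ℚ)^3*cb + 2*(m:ℚ)^3*ca + 2*(m:ℚ)^3*cy + (4/3)*(m:ℚ)^3*c0 + (2/3)*(m:ℚ)^4*cb + (2/3)*(m:ℚ)^4*ca + (2/3)*(m:ℚ)^4*cy) + ((-1/2)*cb + (-1/2)*ca + (-1/2)*cy + 1*cx + (-11/3)*c0 + (-11/3)*(m:ℚ)*cb + (-11/3)*(m:ℚ)*ca + (-11/3)*(m:ℚ)*cy + (11/3)*(m:ℚ)*cx + (-8)*(m:ℚ)*c0 + (-6)*(m:ℚ)^2*cb + (-6)*(m:ℚ)^2*ca + (-6)*(m:ℚ)^2*cy + 4*(m:ℚ)^2*cx + (-4)*(m:ℚ)^2*c0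 + (-8/3)*(m:ℚ)^3*cb + (-8/3)*(m:ℚ)^3*ca + (-8/3)*(m:ℚ)^3*cy + (4/3)*(m:ℚ)^3*cx)*(x:ℚ) + ((11/6)*cb + (11/6)*ca + (11/6)*cy + (-11/3)*cx + 4*c0 + 6*(m:ℚ)*cb + 6*(m:ℚ)*ca + 6*(m:ℚ)*cy + (-8)*(m:ℚ)*cx + 4*(m:ℚ)*c0 + 4*(m:ℚ)^2*cb + 4*(m:ℚ)^2*ca + 4*(m:ℚ)^2*cy + (-4)*(m:ℚ)^2*cx)*(x:ℚ)^2 + ((-2)*cb + (-2)*ca + (-2)*cy + 4*cx + (-4/3)*c0 + (-8/3)*(m:ℚ)*cb + (-8/3)*(m:ℚ)*ca + (-8/3)*(m:ℚ)*cy + 4*(m:ℚ)*cx)*(x:ℚ)^3 + ((2/3)*cb + (2/3)*ca + (2/3)*cy + (-4/3)*cx)*(x:ℚ)^4 := by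
    intro x hx
    refine (S1 _ _ (1*c0 + (-2/3)*(x:ℚ)*cb + (-2/3)*(x:ℚ)*ca + 1*(x:ℚ)*cx + (-3)*(x:ℚ)*c0 + 2*(x:ℚ)^2*cb + 2*(x:ℚ)^2*ca + (-3)*(x:ℚ)^2*cx + 2*(x:ℚ)^2*c0 + (-4/3)*(x:ℚ)^3*cb + (-4/3)*(x:ℚ)^3*ca + 2*(x:ℚ)^3*cx + (2/3)*(m:ℚ)*cb + (2/3)*(m:ℚ)*ca + 3*(m:ℚ)*c0 + (-4)*(m:ℚ)*(x:ℚ)*cb + (-4)*(m:ℚ)*(x:ℚ)*ca + 3*(m:ℚ)*(x:ℚ)*cx + (-4)*(m:ℚ)*(x:ℚ)*c0 + 4*(m:ℚ)*(x:ℚ)^2*cb + 4*(m:ℚ)*(x:ℚ)^2*ca + (-4)*(m:ℚ)*(x:ℚ)^2*cx + 2*(m:ℚ)^2*cb + 2*(m:ℚ)^2*ca + 2*(m:ℚ)^2*c0 + (-4)*(m:ℚ)^2*(x:ℚ)*cb + (-4)*(m:ℚ)^2*(x:ℚ)*ca + 2*(m:ℚ)^2*(x:ℚ)*cx + (4/3)*(m:ℚ)^3*cb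 + (4/3)*(m:ℚ)^3*ca) ((-1/3)*cb + (-1/3)*ca + 1*cy + (-3/2)*c0 + 2*(x:ℚ)*cb + 2*(x:ℚ)*ca + (-3)*(x:ℚ)*cy + (-3/2)*(x:ℚ)*cx + 2*(x:ℚ)*c0 + (-2)*(x:ℚ)^2*cb + (-2)*(x:ℚ)^2*ca + 2*(x:ℚ)^2*cy + 2*(x:ℚ)^2*cx + (-2)*(m:ℚ)*cb + (-2)*(m:ℚ)*ca + 3*(m:ℚ)*cy + (-2)*(m:ℚ)*c0 + 4*(m:ℚ)*(x:ℚ)*cb + 4*(m:ℚ)*(x:ℚ)*ca + (-4)*(m:ℚ)*(x:ℚ)*cy + (-2)*(m:ℚ)*(x:ℚ)*cx + (-2)*(m:ℚ)^2*cb + (-2)*(m:ℚ)^2*ca + 2*(m:ℚ)^2*cy) ((1/2)*cb + (1/2)*ca + (-3/2)*cy + (1/2)*c0 + (-1)*(x:ℚ)*cb + (-1)*(x:ℚ)*ca + 2*(x:ℚ)*cy + (1/2)*(x:ℚ)*cx + 1*(m:ℚ)*cb + 1*(m:ℚ)*ca + (-2)*(m:ℚ)*cy) ((-1/6)*cb +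 (-1/6)*ca + (1/2)*cy) 0 ?_).trans ?_
    · intro y hy; rw [Ha x hx y hy]; ring
    · rw [show 2*m-2*x = 2*m-2*x from rfl,
        Nat.cast_sub (by simp only [Finset.mem_range] at hx; omega)]
      push_cast; ring
  rw [S1 _ _ (1*c0 + (1/2)*(m:ℚ)*cb + (1/2)*(m:ℚ)*ca + (1/2)*(m:ℚ)*cy + (11/3)*(m:ℚ)*c0 + (11/6)*(m:ℚ)^2*cb + (11/6)*(m:ℚ)^2*ca + (11/6)*(m:ℚ)^2*cy + 4*(m:ℚ)^2*c0 + 2*(m:ℚ)^3*cb + 2*(m:ℚ)^3*ca + 2*(m:ℚ)^3*cy + (4/3)*(m:ℚ)^3*c0 + (2/3)*(m:ℚ)^4*cb + (2/3)*(m:ℚ)^4*ca + (2/3)*(m:ℚ)^4*cy) ((-1/2)*cb + (-1/2)*ca + (-1/2)*cy + 1*cx + (-11/3)*c0 + (-11/3)*(m:ℚ)*cb + (-11/3)*(m:ℚ)*ca + (-11/3)*(m:ℚ)*cy + (11/3)*(m:ℚ)*cx + (-8)*(m:ℚ)*c0 + (-6)*(m:ℚ)^2*cb + (-6)*(m:ℚ)^2*ca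 + (-6)*(m:ℚ)^2*cy + 4*(m:ℚ)^2*cx + (-4)*(m:ℚ)^2*c0 + (-8/3)*(m:ℚ)^3*cb + (-8/3)*(m:ℚ)^3*ca + (-8/3)*(m:ℚ)^3*cy + (4/3)*(m:ℚ)^3*cx) ((11/6)*cb + (11/6)*ca + (11/6)*cy + (-11/3)*cx + 4*c0 + 6*(m:ℚ)*cb + 6*(m:ℚ)*ca + 6*(m:ℚ)*cy + (-8)*(m:ℚ)*cx + 4*(m:ℚ)*c0 + 4*(m:ℚ)^2*cb + 4*(m:ℚ)^2*ca + 4*(m:ℚ)^2*cy + (-4)*(m:ℚ)^2*cx) ((-2)*cb + (-2)*ca + (-2)*cy + 4*cx + (-4/3)*c0 + (-8/3)*(m:ℚ)*cb + (-8/3)*(m:ℚ)*ca + (-8/3)*(m:ℚ)*cy + 4*(m:ℚ)*cx) ((2/3)*cb + (2/3)*ca + (2/3)*cy + (-4/3)*cx) (fun x hx => Hy x hx)]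
  push_cast; ring

lemma quadO (M m : ℕ) (hm : M = 2*m+1) (c0 cx cy ca cb : ℚ) (f : ℕ → ℕ → ℕ → ℕ → ℚ)
    (hf : ∀ x ∈ range (M/2+1), ∀ y ∈ range (M-2*x+1), ∀ a ∈ range (M-2*x-y+1),
      ∀ b ∈ range (M-2*x-y-a+1), f x y a b = c0+cx*x+cy*y+ca*a+cb*b) :
    (∑ x ∈ range (M/2+1), ∑ y ∈ range (M-2*x+1), ∑ a ∈ range (M-2*x-y+1),
      ∑ b ∈ range (M-2*x-y-a+1), f x y a b)
    = 1*cb + 1*ca + 1*cy + 4*c0 + (121/30)*(m:ℚ)*cb + (121/30)*(m:ℚ)*ca + (121/30)*(m:ℚ)*cy + (3/5)*(m:ℚ)*cx + (28/3)*(m:ℚ)*c0 + (35/6)*(m:ℚ)^2*cb + (35/6)*(m:ℚ)^2*ca + (35/6)*(m:ℚ)^2*cy + (3/2)*(m:ℚ)^2*cx + (23/3)*(m:ℚ)^2*c0 + (23/6)*(m:ℚ)^3*cb + (23/6)*(m:ℚ)^3*ca + (23/6)*(m:ℚ)^3*cy + (4/3)*(m:ℚ)^3*cx + (8/3)*(m:ℚ)^3*c0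 + (7/6)*(m:ℚ)^4*cb + (7/6)*(m:ℚ)^4*ca + (7/6)*(m:ℚ)^4*cy + (1/2)*(m:ℚ)^4*cx + (1/3)*(m:ℚ)^4*c0 + (2/15)*(m:ℚ)^5*cb + (2/15)*(m:ℚ)^5*ca + (2/15)*(m:ℚ)^5*cy + (1/15)*(m:ℚ)^5*cx := by
  subst hm
  have h2 : (2*m+1)/2 = m := by omega
  rw [h2] at hf ⊢
  have Hb : ∀ x ∈ range (m+1), ∀ y ∈ range (2*m+1-2*x+1), ∀ a ∈ range (2*m+1-2*x-y+1),
      (∑ b ∈ range (2*m+1-2*x-y-a+1), f x y a b)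
      = (1*cb + 2*c0 + (-3/2)*(y:ℚ)*cb + 2*(y:ℚ)*cy + (-1)*(y:ℚ)*c0 + (1/2)*(y:ℚ)^2*cb + (-1)*(y:ℚ)^2*cy + (-3)*(x:ℚ)*cb + 2*(x:ℚ)*cx + (-2)*(x:ℚ)*c0 + 2*(x:ℚ)*(y:ℚ)*cb + (-2)*(x:ℚ)*(y:ℚ)*cy + (-1)*(x:ℚ)*(y:ℚ)*cx + 2*(x:ℚ)^2*cb + (-2)*(x:ℚ)^2*cx + 3*(m:ℚ)*cb + 2*(m:ℚ)*c0 + (-2)*(m:ℚ)*(y:ℚ)*cb + 2*(m:ℚ)*(y:ℚ)*cy + (-4)*(m:ℚ)*(x:ℚ)*cb + 2*(m:ℚ)*(x:ℚ)*cx + 2*(m:ℚ)^2*cb) + ((-3/2)*cb + 2*ca + (-1)*c0 + 1*(y:ℚ)*cb + (-1)*(y:ℚ)*ca + (-1)*(y:ℚ)*cy + 2*(x:ℚ)*cb + (-2)*(x:ℚ)*ca + (-1)*(x:ℚ)*cx + (-2)*(m:ℚ)*cb + 2*(m:ℚ)*ca)*(a:ℚ) + ((1/2)*cb + (-1)*ca)*(a:ℚ)^2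 := by
    intro x hx y hy a ha
    refine (S1 _ _ (c0+cx*x+cy*y+ca*a) cb 0 0 0 ?_).trans ?_
    · intro b hb; rw [hf x hx y hy a ha b hb]; ring
    · rw [show 2*m+1-2*x-y-a = 2*m+1-(2*x+y+a) from by omega,
        Nat.cast_sub (by simp only [Finset.mem_range] at hx hy ha; omega)]
      push_cast; ring
  have Ha : ∀ x ∈ range (m+1), ∀ y ∈ range (2*m+1-2*x+1),
      (∑ a ∈ range (2*m+1-2*x-y+1), ∑ b ∈ range (2*m+1-2*x-y-a+1), f x y a b)
      = (1*cb + 1*ca + 3*c0 + (-11/3)*(x:ℚ)*cb + (-11/3)*(x:ℚ)*ca + 3*(x:ℚ)*cx + (-5)*(x:ℚ)*c0 + 4*(x:ℚ)^2*cb + 4*(x:ℚ)^2*ca + (-5)*(x:ℚ)^2*cx + 2*(x:ℚ)^2*c0 + (-4/3)*(x:ℚ)^3*cb + (-4/3)*(x:ℚ)^3*ca + 2*(x:ℚ)^3*cx + (11/3)*(m:ℚ)*cb + (11/3)*(m:ℚ)*ca + 5*(m:ℚ)*c0 + (-8)*(m:ℚ)*(x:ℚ)*cb + (-8)*(m:ℚ)*(x:ℚ)*ca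 + 5*(m:ℚ)*(x:ℚ)*cx + (-4)*(m:ℚ)*(x:ℚ)*c0 + 4*(m:ℚ)*(x:ℚ)^2*cb + 4*(m:ℚ)*(x:ℚ)^2*ca + (-4)*(m:ℚ)*(x:ℚ)^2*cx + 4*(m:ℚ)^2*cb + 4*(m:ℚ)^2*ca + 2*(m:ℚ)^2*c0 + (-4)*(m:ℚ)^2*(x:ℚ)*cb + (-4)*(m:ℚ)^2*(x:ℚ)*ca + 2*(m:ℚ)^2*(x:ℚ)*cx + (4/3)*(m:ℚ)^3*cb + (4/3)*(m:ℚ)^3*ca) + ((-11/6)*cb + (-11/6)*ca + 3*cy + (-5/2)*c0 + 4*(x:ℚ)*cb + 4*(x:ℚ)*ca + (-5)*(x:ℚ)*cy + (-5/2)*(x:ℚ)*cx + 2*(x:ℚ)*c0 + (-2)*(x:ℚ)^2*cb + (-2)*(x:ℚ)^2*ca + 2*(x:ℚ)^2*cy + 2*(x:ℚ)^2*cx + (-4)*(m:ℚ)*cb + (-4)*(m:ℚ)*ca + 5*(m:ℚ)*cy + (-2)*(m:ℚ)*c0 + 4*(m:ℚ)*(x:ℚ)*cb + 4*(m:ℚ)*(x:ℚ)*ca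 + (-4)*(m:ℚ)*(x:ℚ)*cy + (-2)*(m:ℚ)*(x:ℚ)*cx + (-2)*(m:ℚ)^2*cb + (-2)*(m:ℚ)^2*ca + 2*(m:ℚ)^2*cy)*(y:ℚ) + (1*cb + 1*ca + (-5/2)*cy + (1/2)*c0 + (-1)*(x:ℚ)*cb + (-1)*(x:ℚ)*ca + 2*(x:ℚ)*cy + (1/2)*(x:ℚ)*cx + 1*(m:ℚ)*cb + 1*(m:ℚ)*ca + (-2)*(m:ℚ)*cy)*(y:ℚ)^2 + ((-1/6)*cb + (-1/6)*ca + (1/2)*cy)*(y:ℚ)^3 := by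
    intro x hx y hy
    refine (S1 _ _ (1*cb + 2*c0 + (-3/2)*(y:ℚ)*cb + 2*(y:ℚ)*cy + (-1)*(y:ℚ)*c0 + (1/2)*(y:ℚ)^2*cb + (-1)*(y:ℚ)^2*cy + (-3)*(x:ℚ)*cb + 2*(x:ℚ)*cx + (-2)*(x:ℚ)*c0 + 2*(x:ℚ)*(y:ℚ)*cb + (-2)*(x:ℚ)*(y:ℚ)*cy + (-1)*(x:ℚ)*(y:ℚ)*cx + 2*(x:ℚ)^2*cb + (-2)*(x:ℚ)^2*cx + 3*(m:ℚ)*cb + 2*(m:ℚ)*c0 + (-2)*(m:ℚ)*(y:ℚ)*cb + 2*(m:ℚ)*(y:ℚ)*cy + (-4)*(m:ℚ)*(x:ℚ)*cb + 2*(m:ℚ)*(x:ℚ)*cx + 2*(m:ℚ)^2*cb) ((-3/2)*cb + 2*ca + (-1)*c0 + 1*(y:ℚ)*cb + (-1)*(y:ℚ)*ca + (-1)*(y:ℚ)*cy + 2*(x:ℚ)*cb + (-2)*(x:ℚ)*ca + (-1)*(x:ℚ)*cx + (-2)*(m:ℚ)*cb + 2*(m:ℚ)*ca) ((1/2)*cb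 + (-1)*ca) 0 0 ?_).trans ?_
    · intro a ha; rw [Hb x hx y hy a ha]; ring
    · rw [show 2*m+1-2*x-y = 2*m+1-(2*x+y) from by omega,
        Nat.cast_sub (by simp only [Finset.mem_range] at hx hy; omega)]
      push_cast; ring
  have Hy : ∀ x ∈ range (m+1),
      (∑ y ∈ range (2*m+1-2*x+1), ∑ a ∈ range (2*m+1-2*x-y+1), ∑ b ∈ range (2*m+1-2*x-y-a+1), f x y a b)
      = (1*cb + 1*ca + 1*cy + 4*c0 + (25/6)*(m:ℚ)*cb + (25/6)*(m:ℚ)*ca + (25/6)*(m:ℚ)*cy + (26/3)*(m:ℚ)*c0 + (35/6)*(m:ℚ)^2*cb + (35/6)*(m:ℚ)^2*ca + (35/6)*(m:ℚ)^2*cy + 6*(m:ℚ)^2*c0 + (10/3)*(m:ℚ)^3*cb + (10/3)*(m:ℚ)^3*ca + (10/3)*(m:ℚ)^3*cy + (4/3)*(m:ℚ)^3*c0 + (2/3)*(m:ℚ)^4*cb + (2/3)*(m:ℚ)^4*ca + (2/3)*(m:ℚ)^4*cy) + ((-25/6)*cb + (-25/6)*ca + (-25/6)*cy + 4*cx + (-26/3)*c0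 + (-35/3)*(m:ℚ)*cb + (-35/3)*(m:ℚ)*ca + (-35/3)*(m:ℚ)*cy + (26/3)*(m:ℚ)*cx + (-12)*(m:ℚ)*c0 + (-10)*(m:ℚ)^2*cb + (-10)*(m:ℚ)^2*ca + (-10)*(m:ℚ)^2*cy + 6*(m:ℚ)^2*cx + (-4)*(m:ℚ)^2*c0 + (-8/3)*(m:ℚ)^3*cb + (-8/3)*(m:ℚ)^3*ca + (-8/3)*(m:ℚ)^3*cy + (4/3)*(m:ℚ)^3*cx)*(x:ℚ) + ((35/6)*cb + (35/6)*ca + (35/6)*cy + (-26/3)*cx + 6*c0 + 10*(m:ℚ)*cb + 10*(m:ℚ)*ca + 10*(m:ℚ)*cy + (-12)*(m:ℚ)*cx + 4*(m:ℚ)*c0 + 4*(m:ℚ)^2*cb + 4*(m:ℚ)^2*ca + 4*(m:ℚ)^2*cy + (-4)*(m:ℚ)^2*cx)*(x:ℚ)^2 + ((-10/3)*cb + (-10/3)*ca + (-10/3)*cy + 6*cx + (-4/3)*c0 + (-8/3)*(m:ℚ)*cb + (-8/3)*(m:ℚ)*ca + (-8/3)*(m:ℚ)*cy + 4*(m:ℚ)*cx)*(x:ℚ)^3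 + ((2/3)*cb + (2/3)*ca + (2/3)*cy + (-4/3)*cx)*(x:ℚ)^4 := by
    intro x hx
    refine (S1 _ _ (1*cb + 1*ca + 3*c0 + (-11/3)*(x:ℚ)*cb + (-11/3)*(x:ℚ)*ca + 3*(x:ℚ)*cx + (-5)*(x:ℚ)*c0 + 4*(x:ℚ)^2*cb + 4*(x:ℚ)^2*ca + (-5)*(x:ℚ)^2*cx + 2*(x:ℚ)^2*c0 + (-4/3)*(x:ℚ)^3*cb + (-4/3)*(x:ℚ)^3*ca + 2*(x:ℚ)^3*cx + (11/3)*(m:ℚ)*cb + (11/3)*(m:ℚ)*ca + 5*(m:ℚ)*c0 + (-8)*(m:ℚ)*(x:ℚ)*cb + (-8)*(m:ℚ)*(x:ℚ)*ca + 5*(m:ℚ)*(x:ℚ)*cx + (-4)*(m:ℚ)*(x:ℚ)*c0 + 4*(m:ℚ)*(x:ℚ)^2*cb + 4*(m:ℚ)*(x:ℚ)^2*ca + (-4)*(m:ℚ)*(x:ℚ)^2*cx + 4*(m:ℚ)^2*cb + 4*(m:ℚ)^2*ca + 2*(m:ℚ)^2*c0 + (-4)*(m:ℚ)^2*(x:ℚ)*cb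 + (-4)*(m:ℚ)^2*(x:ℚ)*ca + 2*(m:ℚ)^2*(x:ℚ)*cx + (4/3)*(m:ℚ)^3*cb + (4/3)*(m:ℚ)^3*ca) ((-11/6)*cb + (-11/6)*ca + 3*cy + (-5/2)*c0 + 4*(x:ℚ)*cb + 4*(x:ℚ)*ca + (-5)*(x:ℚ)*cy + (-5/2)*(x:ℚ)*cx + 2*(x:ℚ)*c0 + (-2)*(x:ℚ)^2*cb + (-2)*(x:ℚ)^2*ca + 2*(x:ℚ)^2*cy + 2*(x:ℚ)^2*cx + (-4)*(m:ℚ)*cb + (-4)*(m:ℚ)*ca + 5*(m:ℚ)*cy + (-2)*(m:ℚ)*c0 + 4*(m:ℚ)*(x:ℚ)*cb + 4*(m:ℚ)*(x:ℚ)*ca + (-4)*(m:ℚ)*(x:ℚ)*cy + (-2)*(m:ℚ)*(x:ℚ)*cx + (-2)*(m:ℚ)^2*cb + (-2)*(m:ℚ)^2*ca + 2*(m:ℚ)^2*cy) (1*cb + 1*ca + (-5/2)*cy + (1/2)*c0 + (-1)*(x:ℚ)*cb + (-1)*(x:ℚ)*ca + 2*(x:ℚ)*cy + (1/2)*(x:ℚ)*cx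 + 1*(m:ℚ)*cb + 1*(m:ℚ)*ca + (-2)*(m:ℚ)*cy) ((-1/6)*cb + (-1/6)*ca + (1/2)*cy) 0 ?_).trans ?_
    · intro y hy; rw [Ha x hx y hy]; ring
    · rw [show 2*m+1-2*x = 2*m+1-2*x from rfl,
        Nat.cast_sub (by simp only [Finset.mem_range] at hx; omega)]
      push_cast; ring
  rw [S1 _ _ (1*cb + 1*ca + 1*cy + 4*c0 + (25/6)*(m:ℚ)*cb + (25/6)*(m:ℚ)*ca + (25/6)*(m:ℚ)*cy + (26/3)*(m:ℚ)*c0 + (35/6)*(m:ℚ)^2*cb + (35/6)*(m:ℚ)^2*ca + (35/6)*(m:ℚ)^2*cy + 6*(m:ℚ)^2*c0 + (10/3)*(m:ℚ)^3*cb + (10/3)*(m:ℚ)^3*ca + (10/3)*(m:ℚ)^3*cy + (4/3)*(m:ℚ)^3*c0 + (2/3)*(m:ℚ)^4*cb + (2/3)*(m:ℚ)^4*ca + (2/3)*(m:ℚ)^4*cy) ((-25/6)*cb + (-25/6)*ca + (-25/6)*cy + 4*cx + (-26/3)*c0 + (-35/3)*(m:ℚ)*cb + (-35/3)*(m:ℚ)*ca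 + (-35/3)*(m:ℚ)*cy + (26/3)*(m:ℚ)*cx + (-12)*(m:ℚ)*c0 + (-10)*(m:ℚ)^2*cb + (-10)*(m:ℚ)^2*ca + (-10)*(m:ℚ)^2*cy + 6*(m:ℚ)^2*cx + (-4)*(m:ℚ)^2*c0 + (-8/3)*(m:ℚ)^3*cb + (-8/3)*(m:ℚ)^3*ca + (-8/3)*(m:ℚ)^3*cy + (4/3)*(m:ℚ)^3*cx) ((35/6)*cb + (35/6)*ca + (35/6)*cy + (-26/3)*cx + 6*c0 + 10*(m:ℚ)*cb + 10*(m:ℚ)*ca + 10*(m:ℚ)*cy + (-12)*(m:ℚ)*cx + 4*(m:ℚ)*c0 + 4*(m:ℚ)^2*cb + 4*(m:ℚ)^2*ca + 4*(m:ℚ)^2*cy + (-4)*(m:ℚ)^2*cx) ((-10/3)*cb + (-10/3)*ca + (-10/3)*cy + 6*cx + (-4/3)*c0 + (-8/3)*(m:ℚ)*cb + (-8/3)*(m:ℚ)*ca + (-8/3)*(m:ℚ)*cy + 4*(m:ℚ)*cx) ((2/3)*cb + (2/3)*ca + (2/3)*cy + (-4/3)*cx) (fun x hx => Hy x hx)]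
  push_cast; ring
set_option maxRecDepth 10000
set_option maxHeartbeats 1000000

def Cset (n : ℕ) (v : Fin 5 → ℤ) : Prop :=
  0 ≤ v 0 ∧ 0 ≤ v 1 ∧ 0 ≤ v 2 ∧ 0 ≤ v 4 ∧ v 4 ≤ v 0 + v 3 ∧ 50*v 4 ≤ 51*v 3 ∧
  v 0 + v 1 + v 2 + v 3 ≤ (n:ℤ) + 50*v 0 ∧ 51*(v 0 + v 1 + v 2 + v 3) ≤ 51*(n:ℤ) + 50*v 4

instance (n : ℕ) : DecidablePred (Cset n) := fun v => by unfold Cset; infer_instance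

noncomputable def Fs (n : ℕ) : Finset (Fin 5 → ℤ) :=
  (Finset.Icc 0 (fun _ => 51*(n:ℤ))).filter (Cset n)

lemma mem_Fs {n : ℕ} {v : Fin 5 → ℤ} : v ∈ Fs n ↔ Cset n v := by
  simp only [Fs, Finset.mem_filter, Finset.mem_Icc, Pi.le_def, Pi.zero_apply]
  constructor
  · exact fun h => h.2
  · intro h
    obtain ⟨h1,h2,h3,h4,h5,h6,h7,h8⟩ := h
    refine ⟨⟨?_, ?_⟩, h1,h2,h3,h4,h5,h6,h7,h8⟩ <;> intro i <;> fin_cases i <;> simp <;> omega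

abbrev Sig5 := Σ _ : ℕ, Σ _ : ℕ, Σ _ : ℕ, Σ _ : ℕ, ℕ

def SA1 (n : ℕ) : Finset Sig5 :=
  (range (n/2+1)).sigma fun x => (range (n-2*x+1)).sigma fun y =>
    (range (n-2*x-y+1)).sigma fun a => (range (n-2*x-y-a+1)).sigma fun _ =>
      range (51*x+y+1)

lemma cardA1 (n : ℕ) :
    ((Fs n).filter (fun v => v 4 ≤ v 3 ∧ 2*v 0 + v 1 + v 2 + v 3 - v 4 ≤ (n:ℤ))).card
    = (SA1 n).card := by
  refine Finset.card_bij'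
    (fun v _ => (⟨(v 0).toNat, ((n:ℤ) - 2*v 0 - v 1 - v 2 - v 3 + v 4).toNat,
      ⟨(v 1).toNat, (v 2).toNat, (v 4).toNat⟩⟩ : Sig5))
    (fun t _ => ![ (t.1:ℤ), (t.2.2.1:ℤ), (t.2.2.2.1:ℤ),
      (n:ℤ)-2*t.1-t.2.1-t.2.2.1-t.2.2.2.1+t.2.2.2.2, (t.2.2.2.2:ℤ) ]) ?_ ?_ ?_ ?_
  · intro v hv
    simp only [Finset.mem_filter, mem_Fs, Cset] at hv
    simp only [SA1, Finset.mem_sigma, Finset.mem_range]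
    omega
  · intro t ht
    obtain ⟨x, y, a, b, w⟩ := t
    simp only [SA1, Finset.mem_sigma, Finset.mem_range] at ht
    simp only [Finset.mem_filter, mem_Fs, Cset, Matrix.cons_val_zero, Matrix.cons_val_one,
      Matrix.head_cons, Matrix.cons_val_two, Matrix.tail_cons, Matrix.cons_val_three,
      Matrix.cons_val_four]
    omega
  · intro v hv
    simp only [Finset.mem_filter, mem_Fs, Cset] at hv
    funext i
    fin_cases i <;> simp <;> omega
  · intro t ht
    obtain ⟨x, y, a, b, w⟩ := t
    simp only [SA1, Finset.mem_sigma, Finset.mem_range] at ht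
    simp
    omega

def SA2 (n : ℕ) : Finset Sig5 :=
  (range ((n-1)/2+1)).sigma fun x => (range (n-1-2*x+1)).sigma fun y =>
    (range (n-1-2*x-y+1)).sigma fun a => (range (n-1-2*x-y-a+1)).sigma fun _ =>
      range (51*x+1)

def SB1 (n : ℕ) : Finset Sig5 :=
  (range ((n-1)/2+1)).sigma fun x => (range (n-1-2*x+1)).sigma fun y =>
    (range (n-1-2*x-y+1)).sigma fun a => (range (n-1-2*x-y-a+1)).sigma fun b =>
      range (n+49*x-y-a-b)

def SB2 (n : ℕ) : Finset Sig5 :=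
  (range ((n-2)/2+1)).sigma fun x => (range (n-2-2*x+1)).sigma fun y =>
    (range (n-2-2*x-y+1)).sigma fun a => (range (n-2-2*x-y-a+1)).sigma fun _ =>
      range (51*x+1)

lemma cardA2 (n : ℕ) (hn : 1 ≤ n) :
    ((Fs n).filter (fun v => v 4 ≤ v 3 ∧ ¬(2*v 0 + v 1 + v 2 + v 3 - v 4 ≤ (n:ℤ)))).card
    = (SA2 n).card := by
  refine Finset.card_bij'
    (fun v _ => (⟨((n:ℤ) - v 0 - v 1 - v 2 - v 3 + v 4).toNat,
      (2*v 0 + v 1 + v 2 + v 3 - v 4 - n - 1).toNat,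
      ⟨(v 1).toNat, (v 2).toNat, (v 4).toNat⟩⟩ : Sig5))
    (fun t _ => ![ (t.1:ℤ)+t.2.1+1, (t.2.2.1:ℤ), (t.2.2.2.1:ℤ),
      (n:ℤ)-2*t.1-t.2.1-1-t.2.2.1-t.2.2.2.1+t.2.2.2.2, (t.2.2.2.2:ℤ) ]) ?_ ?_ ?_ ?_
  · intro v hv
    simp only [Finset.mem_filter, mem_Fs, Cset] at hv
    simp only [SA2, Finset.mem_sigma, Finset.mem_range]
    omega
  · intro t ht
    obtain ⟨x, y, a, b, w⟩ := t
    simp only [SA2, Finset.mem_sigma, Finset.mem_range] at ht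
    simp only [Finset.mem_filter, mem_Fs, Cset, Matrix.cons_val_zero, Matrix.cons_val_one,
      Matrix.head_cons, Matrix.cons_val_two, Matrix.tail_cons, Matrix.cons_val_three,
      Matrix.cons_val_four]
    omega
  · intro v hv
    simp only [Finset.mem_filter, mem_Fs, Cset] at hv
    funext i
    fin_cases i <;> simp <;> omega
  · intro t ht
    obtain ⟨x, y, a, b, w⟩ := t
    simp only [SA2, Finset.mem_sigma, Finset.mem_range] at ht
    simp
    omega

lemma cardB1 (n : ℕ) (hn : 1 ≤ n) :
    ((Fs n).filter (fun v => ¬(v 4 ≤ v 3) ∧ 2*v 0 + v 1 + v 2 + v 3 - v 4 ≤ (n:ℤ))).card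
    = (SB1 n).card := by
  refine Finset.card_bij'
    (fun v _ => (⟨(v 0 + v 3 - v 4).toNat, (v 4 - v 3 - 1).toNat,
      ⟨(v 1).toNat, (v 2).toNat, (51*v 3 - 50*v 4).toNat⟩⟩ : Sig5))
    (fun t _ => ![ (t.1:ℤ)+t.2.1+1, (t.2.2.1:ℤ), (t.2.2.2.1:ℤ),
      (t.2.2.2.2:ℤ)+50*(t.2.1+1), (t.2.2.2.2:ℤ)+51*(t.2.1+1) ]) ?_ ?_ ?_ ?_
  · intro v hv
    simp only [Finset.mem_filter, mem_Fs, Cset] at hv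
    simp only [SB1, Finset.mem_sigma, Finset.mem_range]
    omega
  · intro t ht
    obtain ⟨x, y, a, b, w⟩ := t
    simp only [SB1, Finset.mem_sigma, Finset.mem_range] at ht
    simp only [Finset.mem_filter, mem_Fs, Cset, Matrix.cons_val_zero, Matrix.cons_val_one,
      Matrix.head_cons, Matrix.cons_val_two, Matrix.tail_cons, Matrix.cons_val_three,
      Matrix.cons_val_four]
    omega
  · intro v hv
    simp only [Finset.mem_filter, mem_Fs, Cset] at hv
    funext i
    fin_cases i <;> simp <;> omega
  · intro t ht
    obtain ⟨x, y, a, b, w⟩ := t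
    simp only [SB1, Finset.mem_sigma, Finset.mem_range] at ht
    simp
    omega

lemma cardB2 (n : ℕ) (hn : 2 ≤ n) :
    ((Fs n).filter (fun v => ¬(v 4 ≤ v 3) ∧ ¬(2*v 0 + v 1 + v 2 + v 3 - v 4 ≤ (n:ℤ)))).card
    = (SB2 n).card := by
  refine Finset.card_bij'
    (fun v _ => (⟨((n:ℤ) - v 0 - v 1 - v 2).toNat, (v 4 - v 3 - 1).toNat,
      ⟨(v 1).toNat, (v 2).toNat, (51*v 3 - 50*v 4).toNat⟩⟩ : Sig5))
    (fun t _ => ![ (n:ℤ)-t.1-t.2.2.1-t.2.2.2.1, (t.2.2.1:ℤ), (t.2.2.2.1:ℤ),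
      (t.2.2.2.2:ℤ)+50*(t.2.1+1), (t.2.2.2.2:ℤ)+51*(t.2.1+1) ]) ?_ ?_ ?_ ?_
  · intro v hv
    simp only [Finset.mem_filter, mem_Fs, Cset] at hv
    simp only [SB2, Finset.mem_sigma, Finset.mem_range]
    omega
  · intro t ht
    obtain ⟨x, y, a, b, w⟩ := t
    simp only [SB2, Finset.mem_sigma, Finset.mem_range] at ht
    simp only [Finset.mem_filter, mem_Fs, Cset, Matrix.cons_val_zero, Matrix.cons_val_one,
      Matrix.head_cons, Matrix.cons_val_two, Matrix.tail_cons, Matrix.cons_val_three,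
      Matrix.cons_val_four]
    omega
  · intro v hv
    simp only [Finset.mem_filter, mem_Fs, Cset] at hv
    funext i
    fin_cases i <;> simp <;> omega
  · intro t ht
    obtain ⟨x, y, a, b, w⟩ := t
    simp only [SB2, Finset.mem_sigma, Finset.mem_range] at ht
    simp
    omega

lemma cardB2_one :
    ((Fs 1).filter (fun v => ¬(v 4 ≤ v 3) ∧ ¬(2*v 0 + v 1 + v 2 + v 3 - v 4 ≤ ((1:ℕ):ℤ)))).card
    = 0 := by
  rw [Finset.card_eq_zero, Finset.filter_eq_empty_iff]
  intro v hv
  rw [mem_Fs] at hv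
  obtain ⟨h1,h2,h3,h4,h5,h6,h7,h8⟩ := hv
  push_cast at h7 h8 ⊢
  omega

lemma cardsplit (n : ℕ) : (Fs n).card
    = ((Fs n).filter (fun v => v 4 ≤ v 3 ∧ 2*v 0 + v 1 + v 2 + v 3 - v 4 ≤ (n:ℤ))).card
    + ((Fs n).filter (fun v => v 4 ≤ v 3 ∧ ¬(2*v 0 + v 1 + v 2 + v 3 - v 4 ≤ (n:ℤ)))).card
    + ((Fs n).filter (fun v => ¬(v 4 ≤ v 3) ∧ 2*v 0 + v 1 + v 2 + v 3 - v 4 ≤ (n:ℤ))).card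
    + ((Fs n).filter (fun v => ¬(v 4 ≤ v 3) ∧ ¬(2*v 0 + v 1 + v 2 + v 3 - v 4 ≤ (n:ℤ)))).card := by
  rw [Finset.card_eq_sum_ones (Fs n), Finset.card_filter, Finset.card_filter,
    Finset.card_filter, Finset.card_filter, ← Finset.sum_add_distrib,
    ← Finset.sum_add_distrib, ← Finset.sum_add_distrib]
  refine Finset.sum_congr rfl fun v _ => ?_
  by_cases h1 : v 4 ≤ v 3 <;> by_cases h2 : 2*v 0 + v 1 + v 2 + v 3 - v 4 ≤ (n:ℤ) <;>
    simp [h1, h2]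

lemma cardsplitQ (n : ℕ) : ((Fs n).card : ℚ)
    = (((Fs n).filter (fun v => v 4 ≤ v 3 ∧ 2*v 0 + v 1 + v 2 + v 3 - v 4 ≤ (n:ℤ))).card : ℚ)
    + (((Fs n).filter (fun v => v 4 ≤ v 3 ∧ ¬(2*v 0 + v 1 + v 2 + v 3 - v 4 ≤ (n:ℤ)))).card : ℚ)
    + (((Fs n).filter (fun v => ¬(v 4 ≤ v 3) ∧ 2*v 0 + v 1 + v 2 + v 3 - v 4 ≤ (n:ℤ))).card : ℚ)
    + (((Fs n).filter (fun v => ¬(v 4 ≤ v 3) ∧ ¬(2*v 0 + v 1 + v 2 + v 3 - v 4 ≤ (n:ℤ)))).card : ℚ) := by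
  exact_mod_cast congrArg (Nat.cast : ℕ → ℚ) (cardsplit n)

lemma SA1card (n : ℕ) : ((SA1 n).card : ℚ)
    = ∑ x ∈ range (n/2+1), ∑ y ∈ range (n-2*x+1), ∑ a ∈ range (n-2*x-y+1),
        ∑ b ∈ range (n-2*x-y-a+1), ((51*(x:ℚ)+y+1)) := by
  simp only [SA1, Finset.card_sigma, Finset.card_range]
  push_cast
  ring

lemma SA2card (n : ℕ) : ((SA2 n).card : ℚ)
    = ∑ x ∈ range ((n-1)/2+1), ∑ y ∈ range (n-1-2*x+1), ∑ a ∈ range (n-1-2*x-y+1),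
        ∑ b ∈ range (n-1-2*x-y-a+1), ((51*(x:ℚ)+1)) := by
  simp only [SA2, Finset.card_sigma, Finset.card_range]
  push_cast
  ring

lemma SB1card (n : ℕ) : ((SB1 n).card : ℚ)
    = ∑ x ∈ range ((n-1)/2+1), ∑ y ∈ range (n-1-2*x+1), ∑ a ∈ range (n-1-2*x-y+1),
        ∑ b ∈ range (n-1-2*x-y-a+1), (((n+49*x-y-a-b : ℕ) : ℚ)) := by
  simp only [SB1, Finset.card_sigma, Finset.card_range]
  push_cast
  ring

lemma SB2card (n : ℕ) : ((SB2 n).card : ℚ)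
    = ∑ x ∈ range ((n-2)/2+1), ∑ y ∈ range (n-2-2*x+1), ∑ a ∈ range (n-2-2*x-y+1),
        ∑ b ∈ range (n-2-2*x-y-a+1), ((51*(x:ℚ)+1)) := by
  simp only [SB2, Finset.card_sigma, Finset.card_range]
  push_cast
  ring

lemma countFs (n : ℕ) (hn : 0 < n) : ((Fs n).card : ℚ)
    = 13/30*(n:ℚ)^5 + 55/24*(n:ℚ)^4 + 37/12*(n:ℚ)^3 + 5/24*(n:ℚ)^2 - 1/60*(n:ℚ) + 1 := by
  obtain ⟨k, h1 | h2 | h3⟩ : ∃ k, n = 1 ∨ n = 2*k+2 ∨ n = 2*k+3 := ⟨(n-2)/2, by omega⟩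
  · subst h1
    have e1 := (SA1card 1).trans (quadO 1 0 (by omega) 1 51 1 0 0 _
      (by intro x hx y hy a ha b hb; push_cast; ring))
    have e2 := (SA2card 1).trans (quadE 0 0 (by omega) 1 51 0 0 0 _
      (by intro x hx y hy a ha b hb; push_cast; ring))
    have e3 := (SB1card 1).trans (quadE 0 0 (by omega) 1 49 (-1) (-1) (-1) _
      (by intro x hx y hy a ha b hb
          simp only [Finset.mem_range] at hx hy ha hb
          rw [show 1+49*x-y-a-b = (1+49*x)-(y+a+b) from by omega,
            Nat.cast_sub (by omega)]
          push_cast; ring))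
    rw [cardsplitQ 1, cardA1 1, cardA2 1 (by omega), cardB1 1 (by omega), cardB2_one,
      e1, e2, e3]
    norm_num
  · subst h2
    have e1 := (SA1card (2*k+2)).trans (quadE (2*k+2) (k+1) (by omega) 1 51 1 0 0 _
      (by intro x hx y hy a ha b hb; push_cast; ring))
    have e2 := (SA2card (2*k+2)).trans (quadO (2*k+2-1) k (by omega) 1 51 0 0 0 _
      (by intro x hx y hy a ha b hb; push_cast; ring))
    have e3 := (SB1card (2*k+2)).trans (quadO (2*k+2-1) k (by omega) ((2*k+2 : ℕ) : ℚ) 49 (-1) (-1) (-1) _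
      (by intro x hx y hy a ha b hb
          simp only [Finset.mem_range] at hx hy ha hb
          rw [show 2*k+2+49*x-y-a-b = (2*k+2+49*x)-(y+a+b) from by omega,
            Nat.cast_sub (by omega)]
          push_cast; ring))
    have e4 := (SB2card (2*k+2)).trans (quadE (2*k+2-2) k (by omega) 1 51 0 0 0 _
      (by intro x hx y hy a ha b hb; push_cast; ring))
    rw [cardsplitQ (2*k+2), cardA1 (2*k+2), cardA2 (2*k+2) (by omega),
      cardB1 (2*k+2) (by omega), cardB2 (2*k+2) (by omega), e1, e2, e3, e4]
    push_cast
    ring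
  · subst h3
    have e1 := (SA1card (2*k+3)).trans (quadO (2*k+3) (k+1) (by omega) 1 51 1 0 0 _
      (by intro x hx y hy a ha b hb; push_cast; ring))
    have e2 := (SA2card (2*k+3)).trans (quadE (2*k+3-1) (k+1) (by omega) 1 51 0 0 0 _
      (by intro x hx y hy a ha b hb; push_cast; ring))
    have e3 := (SB1card (2*k+3)).trans (quadE (2*k+3-1) (k+1) (by omega) ((2*k+3 : ℕ) : ℚ) 49 (-1) (-1) (-1) _
      (by intro x hx y hy a ha b hb
          simp only [Finset.mem_range] at hx hy ha hb
          rw [show 2*k+3+49*x-y-a-b = (2*k+3+49*x)-(y+a+b) from by omega,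
            Nat.cast_sub (by omega)]
          push_cast; ring))
    have e4 := (SB2card (2*k+3)).trans (quadO (2*k+3-2) k (by omega) 1 51 0 0 0 _
      (by intro x hx y hy a ha b hb; push_cast; ring))
    rw [cardsplitQ (2*k+3), cardA1 (2*k+3), cardA2 (2*k+3) (by omega),
      cardB1 (2*k+3) (by omega), cardB2 (2*k+3) (by omega), e1, e2, e3, e4]
    push_cast
    ring

def Vset : Set (Fin 5 → ℝ) :=
  {![0, 0, 0, 0, 0], ![1, 0, 0, 0, 0], ![0, 1, 0, 0, 0], ![0, 0, 1, 0, 0],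
    ![0, 0, 0, 1, 0], ![0, 0, 0, 1, 1], ![1, 0, 0, 50, 51]}

lemma hull_halfspace (c : Fin 5 → ℝ) (d : ℝ) (hv : ∀ v ∈ Vset, ∑ i, c i * v i ≤ d) :
    ∀ z ∈ convexHull ℝ Vset, ∑ i, c i * z i ≤ d := by
  intro z hz
  have hlin : IsLinearMap ℝ (fun z : Fin 5 → ℝ => ∑ i, c i * z i) := by
    constructor
    · intro u v; simp [Pi.add_apply, mul_add, Finset.sum_add_distrib]
    · intro r u
      simp only [Pi.smul_apply, smul_eq_mul, Finset.mul_sum]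
      exact Finset.sum_congr rfl fun i _ => by ring
  exact convexHull_min hv (convex_halfSpace_le hlin d) hz


lemma mem_iff (n : ℕ) (hn : 0 < n) (x : Fin 5 → ℤ) :
    ((fun i => (x i : ℝ)) ∈ (n:ℝ) • convexHull ℝ Vset) ↔ Cset n x := by
  have hn' : (0:ℝ) < n := by exact_mod_cast hn
  constructor
  · intro h
    rw [Set.mem_smul_set] at h
    obtain ⟨y, hy, hxy⟩ := h
    have hx : ∀ i, (x i : ℝ) = n * y i := by
      intro i
      have := congrFun hxy i
      simpa [Pi.smul_apply] using this.symm
    have vtx : ∀ (c : Fin 5 → ℝ) (d : ℝ),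
        (∀ v ∈ Vset, ∑ i, c i * v i ≤ d) → ∑ i, c i * y i ≤ d :=
      fun c d hv => hull_halfspace c d hv y hy
    have k1 := vtx ![(-1),0,0,0,0] 0 (by
      intro v hv
      simp only [Vset, Set.mem_insert_iff, Set.mem_singleton_iff] at hv
      rcases hv with rfl|rfl|rfl|rfl|rfl|rfl|rfl <;> norm_num [Fin.sum_univ_five, Matrix.cons_val_two, Matrix.cons_val_three,
          Matrix.cons_val_four, Matrix.tail_cons, Matrix.head_cons])
    have k2 := vtx ![0,(-1),0,0,0] 0 (by
      intro v hv
      simp only [Vset, Set.mem_insert_iff, Set.mem_singleton_iff] at hv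
      rcases hv with rfl|rfl|rfl|rfl|rfl|rfl|rfl <;> norm_num [Fin.sum_univ_five, Matrix.cons_val_two, Matrix.cons_val_three,
          Matrix.cons_val_four, Matrix.tail_cons, Matrix.head_cons])
    have k3 := vtx ![0,0,(-1),0,0] 0 (by
      intro v hv
      simp only [Vset, Set.mem_insert_iff, Set.mem_singleton_iff] at hv
      rcases hv with rfl|rfl|rfl|rfl|rfl|rfl|rfl <;> norm_num [Fin.sum_univ_five, Matrix.cons_val_two, Matrix.cons_val_three,
          Matrix.cons_val_four, Matrix.tail_cons, Matrix.head_cons])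
    have k4 := vtx ![0,0,0,0,(-1)] 0 (by
      intro v hv
      simp only [Vset, Set.mem_insert_iff, Set.mem_singleton_iff] at hv
      rcases hv with rfl|rfl|rfl|rfl|rfl|rfl|rfl <;> norm_num [Fin.sum_univ_five, Matrix.cons_val_two, Matrix.cons_val_three,
          Matrix.cons_val_four, Matrix.tail_cons, Matrix.head_cons])
    have k5 := vtx ![(-1),0,0,(-1),1] 0 (by
      intro v hv
      simp only [Vset, Set.mem_insert_iff, Set.mem_singleton_iff] at hv
      rcases hv with rfl|rfl|rfl|rfl|rfl|rfl|rfl <;> norm_num [Fin.sum_univ_five, Matrix.cons_val_two, Matrix.cons_val_three,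
          Matrix.cons_val_four, Matrix.tail_cons, Matrix.head_cons])
    have k6 := vtx ![0,0,0,(-51),50] 0 (by
      intro v hv
      simp only [Vset, Set.mem_insert_iff, Set.mem_singleton_iff] at hv
      rcases hv with rfl|rfl|rfl|rfl|rfl|rfl|rfl <;> norm_num [Fin.sum_univ_five, Matrix.cons_val_two, Matrix.cons_val_three,
          Matrix.cons_val_four, Matrix.tail_cons, Matrix.head_cons])
    have k7 := vtx ![(-49),1,1,1,0] 1 (by
      intro v hv
      simp only [Vset, Set.mem_insert_iff, Set.mem_singleton_iff] at hv
      rcases hv with rfl|rfl|rfl|rfl|rfl|rfl|rfl <;> norm_num [Fin.sum_univ_five, Matrix.cons_val_two, Matrix.cons_val_three,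
          Matrix.cons_val_four, Matrix.tail_cons, Matrix.head_cons])
    have k8 := vtx ![51,51,51,51,(-50)] 51 (by
      intro v hv
      simp only [Vset, Set.mem_insert_iff, Set.mem_singleton_iff] at hv
      rcases hv with rfl|rfl|rfl|rfl|rfl|rfl|rfl <;> norm_num [Fin.sum_univ_five, Matrix.cons_val_two, Matrix.cons_val_three,
          Matrix.cons_val_four, Matrix.tail_cons, Matrix.head_cons])
    simp only [Fin.sum_univ_five, Matrix.cons_val_zero, Matrix.cons_val_one, Matrix.head_cons,
      Matrix.cons_val_two, Matrix.tail_cons, Matrix.cons_val_three, Matrix.cons_val_four]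
      at k1 k2 k3 k4 k5 k6 k7 k8
    refine ⟨?_, ?_, ?_, ?_, ?_, ?_, ?_, ?_⟩
    · exact_mod_cast (show (0:ℝ) ≤ (x 0 : ℝ) by
        rw [hx 0]; nlinarith [mul_nonneg hn'.le (by linarith : (0:ℝ) ≤ y 0)])
    · exact_mod_cast (show (0:ℝ) ≤ (x 1 : ℝ) by
        rw [hx 1]; nlinarith [mul_nonneg hn'.le (by linarith : (0:ℝ) ≤ y 1)])
    · exact_mod_cast (show (0:ℝ) ≤ (x 2 : ℝ) by
        rw [hx 2]; nlinarith [mul_nonneg hn'.le (by linarith : (0:ℝ) ≤ y 2)])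
    · exact_mod_cast (show (0:ℝ) ≤ (x 4 : ℝ) by
        rw [hx 4]; nlinarith [mul_nonneg hn'.le (by linarith : (0:ℝ) ≤ y 4)])
    · exact_mod_cast (show (x 4:ℝ) ≤ (x 0:ℝ) + (x 3:ℝ) by
        rw [hx 4, hx 0, hx 3]
        nlinarith [mul_nonneg hn'.le (by linarith : (0:ℝ) ≤ y 0 + y 3 - y 4)])
    · exact_mod_cast (show 50*(x 4:ℝ) ≤ 51*(x 3:ℝ) by
        rw [hx 4, hx 3]
        nlinarith [mul_nonneg hn'.le (by linarith : (0:ℝ) ≤ 51*y 3 - 50*y 4)])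
    · exact_mod_cast (show (x 0:ℝ) + (x 1:ℝ) + (x 2:ℝ) + (x 3:ℝ) ≤ (n:ℝ) + 50*(x 0:ℝ) by
        rw [hx 0, hx 1, hx 2, hx 3]
        nlinarith [mul_nonneg hn'.le
          (by linarith : (0:ℝ) ≤ 1 + 50*y 0 - y 0 - y 1 - y 2 - y 3)])
    · exact_mod_cast (show 51*((x 0:ℝ) + (x 1:ℝ) + (x 2:ℝ) + (x 3:ℝ)) ≤ 51*(n:ℝ) + 50*(x 4:ℝ) by
        rw [hx 0, hx 1, hx 2, hx 3, hx 4]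
        nlinarith [mul_nonneg hn'.le
          (by linarith : (0:ℝ) ≤ 51 + 50*y 4 - 51*(y 0 + y 1 + y 2 + y 3))])
  · intro hC
    obtain ⟨h1, h2, h3, h4, h5, h6, h7, h8⟩ := hC
    have r1 : (0:ℝ) ≤ x 0 := by exact_mod_cast h1
    have r2 : (0:ℝ) ≤ x 1 := by exact_mod_cast h2
    have r3 : (0:ℝ) ≤ x 2 := by exact_mod_cast h3
    have r4 : (0:ℝ) ≤ x 4 := by exact_mod_cast h4
    have r5 : (x 4:ℝ) ≤ x 0 + x 3 := by exact_mod_cast h5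
    have r6 : 50*(x 4:ℝ) ≤ 51*(x 3:ℝ) := by exact_mod_cast h6
    have r7 : (x 0:ℝ) + x 1 + x 2 + x 3 ≤ (n:ℝ) + 50*(x 0:ℝ) := by exact_mod_cast h7
    have r8 : 51*((x 0:ℝ) + x 1 + x 2 + x 3) ≤ 51*(n:ℝ) + 50*(x 4:ℝ) := by exact_mod_cast h8
    set f : ℝ := min ((x 0:ℝ)) ((x 4:ℝ)/51) with hfdef
    have hf0 : 0 ≤ f := le_min r1 (by linarith)
    have hf1 : f ≤ (x 0:ℝ) := min_le_left _ _
    have hf2 : 51*f ≤ (x 4:ℝ) := by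
      have := min_le_right ((x 0:ℝ)) ((x 4:ℝ)/51); rw [← hfdef] at this; linarith
    have hf3 : (x 4:ℝ) - (x 3:ℝ) ≤ f := by
      rcases le_total ((x 0:ℝ)) ((x 4:ℝ)/51) with h|h
      · rw [hfdef, min_eq_left h]; linarith
      · rw [hfdef, min_eq_right h]; linarith
    have hf4 : (x 0:ℝ) + x 1 + x 2 + x 3 - n ≤ 50*f := by
      rcases le_total ((x 0:ℝ)) ((x 4:ℝ)/51) with h|h
      · rw [hfdef, min_eq_left h]; linarith
      · rw [hfdef, min_eq_right h]; linarith
    have hnz : (n:ℝ) ≠ 0 := hn'.ne'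
    set W : Fin 7 → ℝ := ![((n:ℝ) - ((x 0:ℝ) + x 1 + x 2 + x 3 - 50*f))/n,
      ((x 0:ℝ) - f)/n, (x 1:ℝ)/n, (x 2:ℝ)/n, ((x 3:ℝ) - (x 4:ℝ) + f)/n,
      ((x 4:ℝ) - 51*f)/n, f/n] with hWdef
    set g : Fin 7 → (Fin 5 → ℝ) := ![![0, 0, 0, 0, 0], ![1, 0, 0, 0, 0], ![0, 1, 0, 0, 0],
      ![0, 0, 1, 0, 0], ![0, 0, 0, 1, 0], ![0, 0, 0, 1, 1], ![1, 0, 0, 50, 51]] with hgdef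
    have hWe0 : W 0 = ((n:ℝ) - ((x 0:ℝ) + x 1 + x 2 + x 3 - 50*f))/n := rfl
    have hWe1 : W 1 = ((x 0:ℝ) - f)/n := rfl
    have hWe2 : W 2 = (x 1:ℝ)/n := rfl
    have hWe3 : W 3 = (x 2:ℝ)/n := rfl
    have hWe4 : W 4 = ((x 3:ℝ) - (x 4:ℝ) + f)/n := rfl
    have hWe5 : W 5 = ((x 4:ℝ) - 51*f)/n := rfl
    have hWe6 : W 6 = f/n := rfl
    have hge0 : g 0 = ![0, 0, 0, 0, 0] := rfl
    have hge1 : g 1 = ![1, 0, 0, 0, 0] := rfl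
    have hge2 : g 2 = ![0, 1, 0, 0, 0] := rfl
    have hge3 : g 3 = ![0, 0, 1, 0, 0] := rfl
    have hge4 : g 4 = ![0, 0, 0, 1, 0] := rfl
    have hge5 : g 5 = ![0, 0, 0, 1, 1] := rfl
    have hge6 : g 6 = ![1, 0, 0, 50, 51] := rfl
    have hW0 : ∀ j ∈ Finset.univ (α := Fin 7), 0 ≤ W j := by
      intro j _
      fin_cases j <;> exact div_nonneg (by linarith) hn'.le
    have hW1 : ∑ j, W j = 1 := by
      rw [Fin.sum_univ_seven, hWe0, hWe1, hWe2, hWe3, hWe4, hWe5, hWe6]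
      field_simp
      ring
    have hg : ∀ j ∈ Finset.univ (α := Fin 7), g j ∈ convexHull ℝ Vset := by
      intro j _
      apply subset_convexHull
      fin_cases j
      · exact Set.mem_insert _ _
      · exact Set.mem_insert_of_mem _ (Set.mem_insert _ _)
      · exact Set.mem_insert_of_mem _ (Set.mem_insert_of_mem _ (Set.mem_insert _ _))
      · exact Set.mem_insert_of_mem _ (Set.mem_insert_of_mem _ (Set.mem_insert_of_mem _
          (Set.mem_insert _ _)))
      · exact Set.mem_insert_of_mem _ (Set.mem_insert_of_mem _ (Set.mem_insert_of_mem _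
          (Set.mem_insert_of_mem _ (Set.mem_insert _ _))))
      · exact Set.mem_insert_of_mem _ (Set.mem_insert_of_mem _ (Set.mem_insert_of_mem _
          (Set.mem_insert_of_mem _ (Set.mem_insert_of_mem _ (Set.mem_insert _ _)))))
      · exact Set.mem_insert_of_mem _ (Set.mem_insert_of_mem _ (Set.mem_insert_of_mem _
          (Set.mem_insert_of_mem _ (Set.mem_insert_of_mem _ (Set.mem_insert_of_mem _ rfl)))))
    have hmem : ∑ j, W j • g j ∈ convexHull ℝ Vset :=
      (convex_convexHull ℝ Vset).sum_mem hW0 hW1 hg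
    rw [Set.mem_smul_set]
    refine ⟨∑ j, W j • g j, hmem, ?_⟩
    have expand : ∀ i, ((n:ℝ) • ∑ j, W j • g j) i = n * ∑ j, W j * (g j i) := by
      intro i; simp [Finset.sum_apply, Finset.mul_sum]
    funext i
    rw [expand i, Fin.sum_univ_seven, hWe0, hWe1, hWe2, hWe3, hWe4, hWe5, hWe6,
      hge0, hge1, hge2, hge3, hge4, hge5, hge6]
    fin_cases i <;> simp <;> field_simp <;> try ring

theorem ehrhart_of_P5 (n : ℕ) (hn : 0 < n) :
    (Set.ncard {x : Fin 5 → ℤ | (fun i => (x i : ℝ)) ∈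
        (n : ℝ) • convexHull ℝ
          ({![0, 0, 0, 0, 0], ![1, 0, 0, 0, 0], ![0, 1, 0, 0, 0], ![0, 0, 1, 0, 0],
            ![0, 0, 0, 1, 0], ![0, 0, 0, 1, 1], ![1, 0, 0, 50, 51]} : Set (Fin 5 → ℝ))} : ℚ)
      = 13 / 30 * n ^ 5 + 55 / 24 * n ^ 4 + 37 / 12 * n ^ 3 + 5 / 24 * n ^ 2
        - 1 / 60 * n + 1 := by
  have hset : {x : Fin 5 → ℤ | (fun i => (x i : ℝ)) ∈
      (n : ℝ) • convexHull ℝ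
        ({![0, 0, 0, 0, 0], ![1, 0, 0, 0, 0], ![0, 1, 0, 0, 0], ![0, 0, 1, 0, 0],
          ![0, 0, 0, 1, 0], ![0, 0, 0, 1, 1], ![1, 0, 0, 50, 51]} : Set (Fin 5 → ℝ))}
      = ↑(Fs n) := by
    ext x
    rw [Set.mem_setOf_eq,
      show ({![0, 0, 0, 0, 0], ![1, 0, 0, 0, 0], ![0, 1, 0, 0, 0], ![0, 0, 1, 0, 0],
          ![0, 0, 0, 1, 0], ![0, 0, 0, 1, 1], ![1, 0, 0, 50, 51]} : Set (Fin 5 → ℝ)) = Vset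
        from rfl,
      mem_iff n hn x, Finset.mem_coe, mem_Fs]
  rw [hset, Set.ncard_coe_finset, countFs n hn]
end

section
/- Let f(X) = (13/6)X³ + X² − (1/6)X + 1 and p(X) = 2X³ + X² + 1 in ℚ[X]. Then for every integer s ≥ 0, the polynomial f(X)·p(X)^s has coefficient of X equal to −1/6, coefficient of X² equal to s+1, constant term equal to 1, and the coefficient of X^r is positive for every r with 3 ≤ r ≤ 3s+3. -/
/-!
Write `c_r` for the coefficients of `f * p ^ s`. Multiplying by `p = 2X³ + X² + 1` gives
`c'_{r+3} = 2 c_r + c_{r+1} + c_{r+3}`, leaves `c_0` and `c_1` unchanged and raises `c_2` by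
`c_0 = 1`. So once the coefficients from degree 3 on are nonnegative, only the two negative
contributions `c_1 = -1/6` to `c'_3` and `c'_4` need care, and they are absorbed by `2 c_0 = 2`
and `c_2 = s + 1`; meanwhile the positive range grows by 3 through the term `2 c_r`.
-/

open Polynomial

section MulCubic

variable {R : Type*} [Semiring R] (q : R[X])

lemma coeff_mul_cubic_zero : (q * (2 * X ^ 3 + X ^ 2 + 1)).coeff 0 = q.coeff 0 := by
  simp [mul_add, ← mul_assoc]

lemma coeff_mul_cubic_one : (q * (2 * X ^ 3 + X ^ 2 + 1)).coeff 1 = q.coeff 1 := by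
  simp [mul_add, coeff_mul_X_pow', ← mul_assoc]

lemma coeff_mul_cubic_two :
    (q * (2 * X ^ 3 + X ^ 2 + 1)).coeff 2 = q.coeff 0 + q.coeff 2 := by
  simp [mul_add, coeff_mul_X_pow', ← mul_assoc]

lemma coeff_mul_cubic_add_three (r : ℕ) :
    (q * (2 * X ^ 3 + X ^ 2 + 1)).coeff (r + 3) =
      2 * q.coeff r + q.coeff (r + 1) + q.coeff (r + 3) := by
  simp [mul_add, coeff_mul_X_pow', ← mul_assoc, (Commute.ofNat_left 2 (q.coeff r)).eq]

end MulCubic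

structure CoeffPattern (s : ℕ) (q : ℚ[X]) : Prop where
  coeff_zero : q.coeff 0 = 1
  coeff_one : q.coeff 1 = -1 / 6
  coeff_two : q.coeff 2 = s + 1
  coeff_add_three_nonneg : ∀ r, 0 ≤ q.coeff (r + 3)
  coeff_add_three_pos : ∀ r ≤ 3 * s, 0 < q.coeff (r + 3)

namespace CoeffPattern

lemma initial : CoeffPattern 0 (C (13 / 6) * X ^ 3 + X ^ 2 - C (1 / 6) * X + 1) where
  coeff_zero := by simp
  coeff_one := by norm_num [Polynomial.coeff_one]
  coeff_two := by simp [Polynomial.coeff_one]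
  coeff_add_three_nonneg r := by
    rcases r with _ | r
    · norm_num [coeff_X, Polynomial.coeff_one]
    · simp [Polynomial.coeff_one, coeff_X_pow]
  coeff_add_three_pos r hr := by
    obtain rfl : r = 0 := by omega
    norm_num [coeff_X, Polynomial.coeff_one]

variable {s : ℕ} {q : ℚ[X]}

lemma mul_cubic_coeff_add_three_pos (h : CoeffPattern s q) {r : ℕ} (hr : r ≤ 3 * (s + 1)) :
    0 < (q * (2 * X ^ 3 + X ^ 2 + 1)).coeff (r + 3) := by
  have hs : (0 : ℚ) ≤ s := s.cast_nonneg
  rw [coeff_mul_cubic_add_three]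
  match r with
  | 0 => linarith [h.coeff_zero, h.coeff_one, h.coeff_add_three_nonneg 0]
  | 1 => linarith [h.coeff_one, h.coeff_two, h.coeff_add_three_nonneg 1]
  | 2 => linarith [h.coeff_two, h.coeff_add_three_nonneg 0, h.coeff_add_three_nonneg 2]
  | k + 3 =>
    linarith [h.coeff_add_three_pos k (by omega), h.coeff_add_three_nonneg (k + 1),
      h.coeff_add_three_nonneg (k + 3)]

lemma mul_cubic (h : CoeffPattern s q) : CoeffPattern (s + 1) (q * (2 * X ^ 3 + X ^ 2 + 1)) where
  coeff_zero := by rw [coeff_mul_cubic_zero, h.coeff_zero]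
  coeff_one := by rw [coeff_mul_cubic_one, h.coeff_one]
  coeff_two := by rw [coeff_mul_cubic_two, h.coeff_zero, h.coeff_two]; push_cast; ring
  coeff_add_three_nonneg r := by
    rcases r with _ | _ | _ | k
    · exact (h.mul_cubic_coeff_add_three_pos (by omega)).le
    · exact (h.mul_cubic_coeff_add_three_pos (by omega)).le
    · exact (h.mul_cubic_coeff_add_three_pos (by omega)).le
    · rw [coeff_mul_cubic_add_three]
      linarith [h.coeff_add_three_nonneg k, h.coeff_add_three_nonneg (k + 1),
        h.coeff_add_three_nonneg (k + 3)]
  coeff_add_three_pos _ := h.mul_cubic_coeff_add_three_pos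

end CoeffPattern

lemma coeffPattern_mul_cubic_pow (s : ℕ) :
    CoeffPattern s
      ((C (13 / 6) * X ^ 3 + X ^ 2 - C (1 / 6) * X + 1) * (2 * X ^ 3 + X ^ 2 + 1) ^ s) := by
  induction s with
  | zero => simpa using CoeffPattern.initial
  | succ s ih => simpa only [pow_succ, mul_assoc] using ih.mul_cubic

theorem coefficients_of_f_mul_p_pow (s : ℕ) :
    let f : Polynomial ℚ := C (13 / 6) * X ^ 3 + X ^ 2 - C (1 / 6) * X + 1
    let p : Polynomial ℚ := 2 * X ^ 3 + X ^ 2 + 1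
    (f * p ^ s).coeff 1 = -1 / 6 ∧
    (f * p ^ s).coeff 2 = (s : ℚ) + 1 ∧
    (f * p ^ s).coeff 0 = 1 ∧
    ∀ r : ℕ, 3 ≤ r → r ≤ 3 * s + 3 → 0 < (f * p ^ s).coeff r := by
  intro f p
  have h : CoeffPattern s (f * p ^ s) := coeffPattern_mul_cubic_pow s
  refine ⟨h.coeff_one, h.coeff_two, h.coeff_zero, fun r hr₃ hr ↦ ?_⟩
  obtain ⟨k, rfl⟩ := Nat.exists_eq_add_of_le' hr₃
  exact h.coeff_add_three_pos k (by omega)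
end

section
/- Let P = [0,10] × [0,10] × Q ⊂ ℝ⁵, where Q = conv{(0,0,0), (1,0,0), (0,1,0), (1,1,100)} ⊂ ℝ³. Then for every positive integer n, the number of lattice points in nP equals (5000/3)n⁵ + (1300/3)n⁴ − 1430n³ − (577/3)n² + (16/3)n + 1. -/
open Pointwise


lemma memQ' (v : Fin 3 → ℝ) :
    v ∈ convexHull ℝ ({![0, 0, 0], ![1, 0, 0], ![0, 1, 0], ![1, 1, 100]} : Set (Fin 3 → ℝ)) ↔
      0 ≤ v 2 ∧ v 2 ≤ 100 * v 0 ∧ v 2 ≤ 100 * v 1 ∧ 100 * (v 0 + v 1) ≤ 100 + v 2 := by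
  constructor
  · intro hv
    have hsub : convexHull ℝ ({![0, 0, 0], ![1, 0, 0], ![0, 1, 0], ![1, 1, 100]} : Set (Fin 3 → ℝ)) ⊆
        {w : Fin 3 → ℝ | 0 ≤ w 2 ∧ w 2 ≤ 100 * w 0 ∧ w 2 ≤ 100 * w 1 ∧ 100 * (w 0 + w 1) ≤ 100 + w 2} := by
      apply convexHull_min
      · intro w hw
        simp only [Set.mem_insert_iff, Set.mem_singleton_iff] at hw
        rcases hw with h | h | h | h <;> subst h <;> norm_num [Matrix.cons_val_two, Matrix.tail_cons, Matrix.head_cons]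
      · rintro x ⟨hx1, hx2, hx3, hx4⟩ y ⟨hy1, hy2, hy3, hy4⟩ a b ha hb hab
        refine ⟨?_, ?_, ?_, ?_⟩ <;>
          simp only [Pi.add_apply, Pi.smul_apply, smul_eq_mul] <;> nlinarith
    exact hsub hv
  · rintro ⟨h1, h2, h3, h4⟩
    have key := Finset.centerMass_mem_convexHull (R := ℝ) (Finset.univ : Finset (Fin 4))
      (w := ![1 - v 0 - v 1 + v 2 / 100, v 0 - v 2 / 100, v 1 - v 2 / 100, v 2 / 100])
      (z := ![![0, 0, 0], ![1, 0, 0], ![0, 1, 0], ![1, 1, 100]])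
      (s := ({![0, 0, 0], ![1, 0, 0], ![0, 1, 0], ![1, 1, 100]} : Set (Fin 3 → ℝ)))
      (by intro i _; fin_cases i <;> simp <;> linarith)
      (by simp [Fin.sum_univ_four]; norm_num; linarith)
      (by intro i _; fin_cases i <;> simp)
    convert key using 1
    funext j
    simp [Finset.centerMass, Fin.sum_univ_four]
    fin_cases j <;> simp <;> ring


lemma memP' (n : ℕ) (hn : 0 < n) (x : Fin 5 → ℤ) :
    ((fun i => (x i : ℝ)) ∈ (n : ℝ) •
      {y : Fin 5 → ℝ | y 0 ∈ Set.Icc (0 : ℝ) 10 ∧ y 1 ∈ Set.Icc (0 : ℝ) 10 ∧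
        ![y 2, y 3, y 4] ∈ convexHull ℝ ({![0, 0, 0], ![1, 0, 0], ![0, 1, 0], ![1, 1, 100]} : Set (Fin 3 → ℝ))}) ↔
      (0 ≤ x 0 ∧ x 0 ≤ 10 * n ∧ 0 ≤ x 1 ∧ x 1 ≤ 10 * n ∧ 0 ≤ x 4 ∧ x 4 ≤ 100 * x 2 ∧
        x 4 ≤ 100 * x 3 ∧ 100 * (x 2 + x 3) ≤ 100 * n + x 4) := by
  have hn' : (0 : ℝ) < n := by exact_mod_cast hn
  have hne : (n : ℝ) ≠ 0 := ne_of_gt hn'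
  rw [Set.mem_smul_set_iff_inv_smul_mem₀ hne]
  simp only [Set.mem_setOf_eq, Pi.smul_apply, smul_eq_mul, Set.mem_Icc, memQ',
    Matrix.cons_val_zero, Matrix.cons_val_one, Matrix.head_cons, Matrix.cons_val_two,
    Matrix.tail_cons]
  have hi : (0 : ℝ) < (n : ℝ)⁻¹ := inv_pos.2 hn'
  have key : ∀ a b : ℤ, ((n : ℝ)⁻¹ * (a : ℝ) ≤ (n : ℝ)⁻¹ * (b : ℝ)) ↔ (a ≤ b) := by
    intro a b
    rw [mul_le_mul_iff_right₀ hi]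
    exact Int.cast_le
  have h0 : (n : ℝ)⁻¹ * ((0 : ℤ) : ℝ) = 0 := by simp
  have h10 : (n : ℝ)⁻¹ * ((10 * n : ℤ) : ℝ) = 10 := by push_cast; field_simp
  have h100 : ∀ a : ℤ, (n : ℝ)⁻¹ * ((100 * a : ℤ) : ℝ) = 100 * ((n : ℝ)⁻¹ * a) := by
    intro a; push_cast; ring
  have hsum : (n : ℝ)⁻¹ * ((100 * (x 2 + x 3) : ℤ) : ℝ)
      = 100 * ((n : ℝ)⁻¹ * (x 2 : ℝ) + (n : ℝ)⁻¹ * (x 3 : ℝ)) := by push_cast; ring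
  have hlast : (n : ℝ)⁻¹ * ((100 * n + x 4 : ℤ) : ℝ) = 100 + (n : ℝ)⁻¹ * (x 4 : ℝ) := by
    push_cast; field_simp
  constructor
  · rintro ⟨⟨a1, a2⟩, ⟨b1, b2⟩, c1, c2, c3, c4⟩
    exact ⟨(key 0 _).1 (by rwa [h0]), (key _ (10 * n)).1 (by rwa [h10]),
      (key 0 _).1 (by rwa [h0]), (key _ (10 * n)).1 (by rwa [h10]),
      (key 0 _).1 (by rwa [h0]), (key _ (100 * x 2)).1 (by rwa [h100]),
      (key _ (100 * x 3)).1 (by rwa [h100]),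
      (key (100 * (x 2 + x 3)) (100 * n + x 4)).1 (by rw [hsum, hlast]; exact c4)⟩
  · rintro ⟨a1, a2, b1, b2, c1, c2, c3, c4⟩
    refine ⟨⟨?_, ?_⟩, ⟨?_, ?_⟩, ?_, ?_, ?_, ?_⟩
    · rw [← h0]; exact (key 0 _).2 a1
    · rw [← h10]; exact (key _ _).2 a2
    · rw [← h0]; exact (key 0 _).2 b1
    · rw [← h10]; exact (key _ _).2 b2
    · rw [← h0]; exact (key 0 _).2 c1
    · rw [← h100]; exact (key _ _).2 c2
    · rw [← h100]; exact (key _ _).2 c3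
    · rw [← hsum, ← hlast]; exact (key _ _).2 c4


lemma insertIcc (n : ℕ) : Finset.Icc (0:ℤ) ((n:ℤ)+1) = insert ((n:ℤ)+1) (Finset.Icc 0 (n:ℤ)) := by
  ext a; simp [Finset.mem_Icc]; omega

lemma notmemIcc (n : ℕ) : ((n:ℤ)+1) ∉ Finset.Icc (0:ℤ) (n:ℤ) := by
  simp

lemma sumA (n : ℕ) : ∑ c ∈ Finset.Icc (0:ℤ) (n:ℤ), (c:ℚ) = n*(n+1)/2 := by
  induction n with
  | zero => simp
  | succ n ih =>
    rw [show ((n+1:ℕ):ℤ) = (n:ℤ)+1 by push_cast; ring, insertIcc, Finset.sum_insert (notmemIcc n), ih]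
    push_cast; ring

lemma sumMin (n : ℕ) :
    ∑ c ∈ Finset.Icc (0:ℤ) (n:ℤ), ∑ d ∈ Finset.Icc (0:ℤ) (n:ℤ), ((min c d : ℤ):ℚ)
      = n*(n+1)*(2*n+1)/6 := by
  induction n with
  | zero => simp
  | succ n ih =>
    rw [show ((n+1:ℕ):ℤ) = (n:ℤ)+1 by push_cast; ring, insertIcc,
      Finset.sum_insert (notmemIcc n), Finset.sum_insert (notmemIcc n)]
    have e1 : ∑ d ∈ Finset.Icc (0:ℤ) (n:ℤ), ((min ((n:ℤ)+1) d : ℤ):ℚ)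
        = ∑ d ∈ Finset.Icc (0:ℤ) (n:ℤ), (d:ℚ) := by
      refine Finset.sum_congr rfl fun d hd => ?_
      have hd' := Finset.mem_Icc.1 hd
      norm_cast; omega
    have e2 : ∀ c ∈ Finset.Icc (0:ℤ) (n:ℤ),
        ∑ d ∈ insert ((n:ℤ)+1) (Finset.Icc (0:ℤ) (n:ℤ)), ((min c d : ℤ):ℚ)
          = (c:ℚ) + ∑ d ∈ Finset.Icc (0:ℤ) (n:ℤ), ((min c d : ℤ):ℚ) := by
      intro c hc
      have hc' := Finset.mem_Icc.1 hc
      rw [Finset.sum_insert (notmemIcc n)]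
      congr 1
      norm_cast; omega
    rw [Finset.sum_congr rfl e2, Finset.sum_add_distrib, e1, ih, sumA n]
    have : ((min ((n:ℤ)+1) ((n:ℤ)+1) : ℤ):ℚ) = (n:ℚ)+1 := by norm_cast; omega
    rw [this]
    push_cast; ring

lemma sumRefl (n : ℕ) (f : ℤ → ℚ) :
    ∑ d ∈ Finset.Icc (0:ℤ) (n:ℤ), f d = ∑ d ∈ Finset.Icc (0:ℤ) (n:ℤ), f ((n:ℤ) - d) := by
  refine Finset.sum_nbij' (fun d => (n:ℤ) - d) (fun d => (n:ℤ) - d) ?_ ?_ ?_ ?_ ?_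
  · intro a ha; simp [Finset.mem_Icc] at ha ⊢; omega
  · intro a ha; simp [Finset.mem_Icc] at ha ⊢; omega
  · intro a _; ring
  · intro a _; ring
  · intro a _; congr 1; ring


lemma sumMax (n : ℕ) :
    ∑ c ∈ Finset.Icc (0:ℤ) (n:ℤ), ∑ d ∈ Finset.Icc (0:ℤ) (n:ℤ), ((max 0 (c + d - n) : ℤ):ℚ)
      = ((n:ℚ)+1) * (n*(n+1)/2) - n*(n+1)*(2*n+1)/6 := by
  have hcard : (Finset.Icc (0:ℤ) (n:ℤ)).card = n + 1 := by
    rw [Int.card_Icc]; omega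
  have step : ∀ c ∈ Finset.Icc (0:ℤ) (n:ℤ),
      ∑ d ∈ Finset.Icc (0:ℤ) (n:ℤ), ((max 0 (c + d - n) : ℤ):ℚ)
        = (c:ℚ) * (n+1) - ∑ d ∈ Finset.Icc (0:ℤ) (n:ℤ), ((min c d : ℤ):ℚ) := by
    intro c _
    rw [sumRefl n (fun d => ((max 0 (c + d - n) : ℤ):ℚ))]
    have : ∀ d ∈ Finset.Icc (0:ℤ) (n:ℤ),
        ((max 0 (c + ((n:ℤ) - d) - n) : ℤ):ℚ) = (c:ℚ) - ((min c d : ℤ):ℚ) := by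
      intro d hd
      have hd' := Finset.mem_Icc.1 hd
      have : (max 0 (c + ((n:ℤ) - d) - n) : ℤ) = c - min c d := by omega
      rw [this]; push_cast; ring
    rw [Finset.sum_congr rfl this, Finset.sum_sub_distrib, Finset.sum_const, hcard]
    push_cast; ring
  rw [Finset.sum_congr rfl step, Finset.sum_sub_distrib, sumMin, ← Finset.sum_mul, sumA]
  ring


lemma countV' (n : ℕ) :
    (((Finset.Icc (0:ℤ) (n:ℤ) ×ˢ Finset.Icc (0:ℤ) (n:ℤ) ×ˢ Finset.Icc (0:ℤ) (100*n)).filter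
      (fun p : ℤ × ℤ × ℤ => 0 ≤ p.2.2 ∧ p.2.2 ≤ 100*p.1 ∧ p.2.2 ≤ 100*p.2.1 ∧
        100*(p.1+p.2.1) ≤ 100*n + p.2.2)).card : ℚ)
      = ((n:ℚ)+1)^2 + 50*n*((n:ℚ)^2-1)/3 := by
  rw [Finset.card_filter]
  push_cast [Finset.sum_product]
  have inner : ∀ c ∈ Finset.Icc (0:ℤ) (n:ℤ), ∀ d ∈ Finset.Icc (0:ℤ) (n:ℤ),
      ∑ e ∈ Finset.Icc (0:ℤ) (100*(n:ℤ)),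
        (if 0 ≤ e ∧ e ≤ 100*c ∧ e ≤ 100*d ∧ 100*(c+d) ≤ 100*(n:ℤ) + e then (1:ℚ) else 0)
      = 100 * ((min c d : ℤ):ℚ) - 100 * ((max 0 (c + d - n) : ℤ):ℚ) + 1 := by
    intro c hc d hd
    have hc' := Finset.mem_Icc.1 hc
    have hd' := Finset.mem_Icc.1 hd
    rw [Finset.sum_boole]
    have hfil : (Finset.Icc (0:ℤ) (100*(n:ℤ))).filter
        (fun e => 0 ≤ e ∧ e ≤ 100*c ∧ e ≤ 100*d ∧ 100*(c+d) ≤ 100*(n:ℤ) + e)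
        = Finset.Icc (max 0 (100*(c+d) - 100*(n:ℤ))) (100 * min c d) := by
      ext e
      simp only [Finset.mem_filter, Finset.mem_Icc]
      omega
    rw [hfil, Int.card_Icc]
    have hnn : (0:ℤ) ≤ 100 * min c d + 1 - max 0 (100*(c+d) - 100*(n:ℤ)) := by omega
    have hcast : ((100 * (c ⊓ d) + 1 - 0 ⊔ (100 * (c + d) - 100 * (n:ℤ))).toNat : ℚ)
        = ((100 * (c ⊓ d) + 1 - 0 ⊔ (100 * (c + d) - 100 * (n:ℤ)) : ℤ) : ℚ) := by
      exact_mod_cast congrArg (Int.cast : ℤ → ℚ) (Int.toNat_of_nonneg hnn)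
    rw [hcast]
    have hz : (100 * (c ⊓ d) + 1 - 0 ⊔ (100 * (c + d) - 100 * (n:ℤ)))
        = 100 * (c ⊓ d) - 100 * (0 ⊔ (c + d - (n:ℤ))) + 1 := by omega
    rw [hz]
    push_cast
    ring
  rw [Finset.sum_congr rfl fun c hc => Finset.sum_congr rfl fun d hd => inner c hc d hd]
  have hcard : (Finset.Icc (0:ℤ) (n:ℤ)).card = n + 1 := by rw [Int.card_Icc]; omega
  simp only [Finset.sum_add_distrib, Finset.sum_sub_distrib, ← Finset.mul_sum,
    Finset.sum_const, hcard, nsmul_eq_mul]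
  rw [sumMin, sumMax]
  push_cast
  ring


theorem ehrhart_of_segment_segment_times_Q100 (n : ℕ) (hn : 0 < n) :
    let Q : Set (Fin 3 → ℝ) :=
      convexHull ℝ {![0, 0, 0], ![1, 0, 0], ![0, 1, 0], ![1, 1, 100]}
    let P : Set (Fin 5 → ℝ) :=
      {x | x 0 ∈ Set.Icc (0 : ℝ) 10 ∧ x 1 ∈ Set.Icc (0 : ℝ) 10 ∧ ![x 2, x 3, x 4] ∈ Q}
    (Set.ncard {x : Fin 5 → ℤ | (fun i => (x i : ℝ)) ∈ (n : ℝ) • P} : ℚ)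
      = 5000 / 3 * n ^ 5 + 1300 / 3 * n ^ 4 - 1430 * n ^ 3 - 577 / 3 * n ^ 2
        + 16 / 3 * n + 1 := by
  intro Q P
  have hAcard : (Finset.Icc (0:ℤ) (10*(n:ℤ))).card = 10*n+1 := by
    rw [Int.card_Icc]; omega
  set φ : (Fin 5 → ℤ) → ℤ × ℤ × ℤ × ℤ × ℤ := fun x => (x 0, x 1, x 2, x 3, x 4) with hφ
  have hinj : Function.Injective φ := by
    intro x y h
    simp only [hφ, Prod.mk.injEq] at h
    obtain ⟨h0, h1, h2, h3, h4⟩ := h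
    funext i
    fin_cases i <;> assumption
  have hsurj : Function.Surjective φ := by
    rintro ⟨a, b, c, d, e⟩
    exact ⟨![a, b, c, d, e], by simp [hφ]⟩
  set V : Finset (ℤ × ℤ × ℤ) :=
    (Finset.Icc (0:ℤ) (n:ℤ) ×ˢ Finset.Icc (0:ℤ) (n:ℤ) ×ˢ Finset.Icc (0:ℤ) (100*n)).filter
      (fun p : ℤ × ℤ × ℤ => 0 ≤ p.2.2 ∧ p.2.2 ≤ 100*p.1 ∧ p.2.2 ≤ 100*p.2.1 ∧
        100*(p.1+p.2.1) ≤ 100*n + p.2.2) with hV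
  set A : Finset ℤ := Finset.Icc (0:ℤ) (10*n) with hA
  set T : Finset (ℤ × ℤ × ℤ × ℤ × ℤ) := A ×ˢ A ×ˢ V with hT
  have hset : {x : Fin 5 → ℤ | (fun i => (x i : ℝ)) ∈ (n : ℝ) • P} = φ ⁻¹' ↑T := by
    ext x
    rw [Set.mem_setOf_eq, memP' n hn x]
    simp only [Set.mem_preimage, hT, hφ, Finset.coe_product, Set.mem_prod, Finset.mem_coe,
      hA, hV, Finset.mem_Icc, Finset.mem_filter, Finset.mem_product]
    constructor
    · rintro ⟨a1, a2, b1, b2, c1, c2, c3, c4⟩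
      refine ⟨⟨a1, a2⟩, ⟨b1, b2⟩, ⟨⟨?_, ?_⟩, ⟨?_, ?_⟩, ?_, ?_⟩, c1, c2, c3, c4⟩ <;> omega
    · rintro ⟨⟨a1, a2⟩, ⟨b1, b2⟩, _, c1, c2, c3, c4⟩
      exact ⟨a1, a2, b1, b2, c1, c2, c3, c4⟩
  have hncard : Set.ncard {x : Fin 5 → ℤ | (fun i => (x i : ℝ)) ∈ (n : ℝ) • P} = T.card := by
    have himg : φ '' {x : Fin 5 → ℤ | (fun i => (x i : ℝ)) ∈ (n : ℝ) • P} = ↑T := by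
      rw [hset, Set.image_preimage_eq _ hsurj]
    rw [← Set.ncard_coe_finset, ← himg]
    exact (Set.ncard_image_of_injective _ hinj).symm
  rw [hncard]
  have hcardT : T.card = (10*n+1) * ((10*n+1) * V.card) := by
    rw [hT, Finset.card_product, Finset.card_product]
    rw [hA, hAcard]
  rw [hcardT]
  push_cast
  rw [countV' n]
  push_cast
  ring
end

section
/- Let P = conv{(0,0,0,0,0,0), e₁, e₂, e₃, e₄, e₅, e₁ + e₂ + 999e₅ + 1000e₆} ⊂ ℝ⁶, where e_i denotes the i-th standard unit vector of ℝ⁶. Then for every positive integer n, the number of lattice points in nP equals (25/18)n⁶ + (751/60)n⁵ + (2515/72)n⁴ + (131/6)n³ − (2435/72)n² − (617/20)n + 1. -/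
/-!
The vertices `v₀ = 0, v₁ = e₁, …, v₅ = e₅, v₆ = e₁ + e₂ + 999e₅ + 1000e₆` of `P` span a simplex of
normalized volume 1000. Lifting `P` to height one, every lattice point of the cone over `P` is
uniquely a box point plus an `ℕ`-combination of the lifted vertices. The box points are `0` (height
0) and `(1, 1, 0, 0, r, r)` for `1 ≤ r ≤ 999` (height 2), so `h*(t) = 1 + 999 t²` and the number of
lattice points of `nP` is `C(n + 6, 6) + 999 C(n + 4, 6)`, which expands to the stated polynomial.
-/

open Pointwise

-- `w ∈ t • P` for `t > 0`: each inequality says that one barycentric coordinate of `w / t` is `≥ 0`.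
def InDilatedP {R : Type*} [CommRing R] [LE R] (t : R) (w : Fin 6 → R) : Prop :=
  0 ≤ w 5 ∧ w 5 ≤ 1000 * w 0 ∧ w 5 ≤ 1000 * w 1 ∧ 0 ≤ w 2 ∧ 0 ≤ w 3 ∧
    999 * w 5 ≤ 1000 * w 4 ∧ w 0 + w 1 + w 2 + w 3 + w 4 - w 5 ≤ t

abbrev verticesP : Set (Fin 6 → ℝ) :=
  {![0, 0, 0, 0, 0, 0], ![1, 0, 0, 0, 0, 0], ![0, 1, 0, 0, 0, 0],
    ![0, 0, 1, 0, 0, 0], ![0, 0, 0, 1, 0, 0], ![0, 0, 0, 0, 1, 0],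
    ![1, 1, 0, 0, 999, 1000]}

lemma convex_setOf_inDilatedP (t : ℝ) : Convex ℝ {w | InDilatedP t w} := by
  rintro v ⟨h1, h2, h3, h4, h5, h6, h7⟩ w ⟨g1, g2, g3, g4, g5, g6, g7⟩ a b ha hb hab
  refine ⟨?_, ?_, ?_, ?_, ?_, ?_, ?_⟩ <;>
    simp only [Pi.add_apply, Pi.smul_apply, smul_eq_mul] <;> nlinarith

lemma verticesP_subset : verticesP ⊆ {w | InDilatedP 1 w} := by
  simp only [verticesP, Set.insert_subset_iff, Set.singleton_subset_iff, Set.mem_ofPred_eq,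
    InDilatedP, Matrix.cons_val]
  norm_num

lemma subset_convexHull_verticesP : {w | InDilatedP 1 w} ⊆ convexHull ℝ verticesP := by
  rintro w ⟨h1, h2, h3, h4, h5, h6, h7⟩
  let vertex : Fin 7 → Fin 6 → ℝ :=
    ![![0, 0, 0, 0, 0, 0], ![1, 0, 0, 0, 0, 0], ![0, 1, 0, 0, 0, 0],
      ![0, 0, 1, 0, 0, 0], ![0, 0, 0, 1, 0, 0], ![0, 0, 0, 0, 1, 0],
      ![1, 1, 0, 0, 999, 1000]]
  let coord : Fin 7 → ℝ :=
    ![1 - (w 0 + w 1 + w 2 + w 3 + w 4 - w 5), w 0 - w 5 / 1000, w 1 - w 5 / 1000, w 2, w 3,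
      w 4 - 999 * w 5 / 1000, w 5 / 1000]
  have hw : w = ∑ j, coord j • vertex j := by
    funext i
    fin_cases i <;>
      simp only [coord, vertex, Fin.sum_univ_seven, Finset.sum_apply, Pi.smul_apply, smul_eq_mul,
        Matrix.cons_val, Fin.isValue, Fin.zero_eta, Fin.mk_one, Fin.reduceFinMk] <;> ring
  rw [hw]
  refine (convex_convexHull ℝ _).sum_mem (fun j _ => ?_) ?_ (fun j _ => ?_)
  · fin_cases j <;>
      simp only [coord, Matrix.cons_val, Fin.isValue, Fin.zero_eta, Fin.mk_one, Fin.reduceFinMk] <;>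
      linarith
  · simp only [coord, Fin.sum_univ_seven, Matrix.cons_val, Fin.isValue]
    ring
  · exact subset_convexHull ℝ _ (by fin_cases j <;> simp [vertex, verticesP])

lemma convexHull_verticesP : convexHull ℝ verticesP = {w | InDilatedP 1 w} :=
  (convexHull_min verticesP_subset (convex_setOf_inDilatedP 1)).antisymm
    subset_convexHull_verticesP

lemma InDilatedP.smul {c t : ℝ} {w : Fin 6 → ℝ} (hc : 0 ≤ c) (hw : InDilatedP t w) :
    InDilatedP (c * t) (c • w) := by
  obtain ⟨h1, h2, h3, h4, h5, h6, h7⟩ := hw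
  refine ⟨?_, ?_, ?_, ?_, ?_, ?_, ?_⟩ <;> simp only [Pi.smul_apply, smul_eq_mul] <;> nlinarith

lemma smul_setOf_inDilatedP {c : ℝ} (hc : 0 < c) (t : ℝ) :
    c • {w | InDilatedP t w} = {w | InDilatedP (c * t) w} := by
  ext w
  constructor
  · rintro ⟨v, hv, rfl⟩
    exact hv.smul hc.le
  · intro hw
    refine ⟨c⁻¹ • w, ?_, smul_inv_smul₀ hc.ne' w⟩
    simpa only [Set.mem_ofPred_eq, inv_mul_cancel_left₀ hc.ne'] using hw.smul (inv_nonneg.2 hc.le)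

lemma inDilatedP_intCast_iff (t : ℤ) (x : Fin 6 → ℤ) :
    InDilatedP (t : ℝ) (fun i => (x i : ℝ)) ↔ InDilatedP t x := by
  simp only [InDilatedP]
  norm_cast

lemma setOf_intCast_mem_smul_convexHull_verticesP {n : ℕ} (hn : 0 < n) :
    {x : Fin 6 → ℤ | (fun i => (x i : ℝ)) ∈ (n : ℝ) • convexHull ℝ verticesP} =
      {x | InDilatedP (n : ℤ) x} := by
  ext x
  rw [convexHull_verticesP, smul_setOf_inDilatedP (by positivity), mul_one, Set.mem_ofPred_eq,
    Set.mem_ofPred_eq, Set.mem_ofPred_eq, ← inDilatedP_intCast_iff, Int.cast_natCast]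

-- `∑ i, z i • vᵢ`; the multiplicity `z 0` of `v₀ = 0` only contributes height.
def coneGen (z : Fin 7 → ℕ) : Fin 6 → ℤ :=
  ![z 1 + z 6, z 2 + z 6, z 3, z 4, z 5 + 999 * z 6, 1000 * z 6]

def boxPt (r : ℤ) : Fin 6 → ℤ := ![1, 1, 0, 0, r, r]

def latticePt (n : ℕ) :
    {z : Fin 7 → ℕ // ∑ i, z i = n} ⊕ Fin 999 × {z : Fin 7 → ℕ // ∑ i, z i + 2 = n} →
      Fin 6 → ℤ
  | .inl z => coneGen z
  | .inr (r, z) => boxPt (r + 1) + coneGen z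

lemma inDilatedP_latticePt (n : ℕ) (ω) : InDilatedP (n : ℤ) (latticePt n ω) := by
  rcases ω with ⟨z, hz⟩ | ⟨r, z, hz⟩ <;>
    simp only [latticePt, InDilatedP, coneGen, boxPt, Pi.add_apply, Matrix.cons_val] <;>
    rw [Fin.sum_univ_seven] at hz
  · omega
  · have := r.isLt
    omega

lemma eq_of_coneGen_eq {z z' : Fin 7 → ℕ} (hs : ∑ i, z i = ∑ i, z' i)
    (h : coneGen z = coneGen z') : z = z' := by
  have h0 := congrFun h 0
  have h1 := congrFun h 1
  have h2 := congrFun h 2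
  have h3 := congrFun h 3
  have h4 := congrFun h 4
  have h5 := congrFun h 5
  simp only [coneGen, Matrix.cons_val] at h0 h1 h2 h3 h4 h5
  rw [Fin.sum_univ_seven, Fin.sum_univ_seven] at hs
  funext i
  fin_cases i <;> simp only [Fin.isValue, Fin.zero_eta, Fin.mk_one, Fin.reduceFinMk] <;> omega

lemma latticePt_injective (n : ℕ) : Function.Injective (latticePt n) := by
  rintro (⟨z, hz⟩ | ⟨r, z, hz⟩) (⟨z', hz'⟩ | ⟨r', z', hz'⟩) h <;>
    have h5 := congrFun h 5 <;>
    simp only [latticePt, coneGen, boxPt, Pi.add_apply, Matrix.cons_val] at h h5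
  · obtain rfl := eq_of_coneGen_eq (hz.trans hz'.symm) h
    rfl
  · have := r'.isLt; omega
  · have := r.isLt; omega
  · obtain rfl : r = r' := Fin.ext (by have := r.isLt; have := r'.isLt; omega)
    obtain rfl := eq_of_coneGen_eq (by omega) (add_left_cancel h)
    rfl

lemma exists_coneGen_eq {h : ℤ} {y : Fin 6 → ℤ} (hy : InDilatedP h y) (hy5 : 1000 ∣ y 5) :
    ∃ z : Fin 7 → ℕ, ((∑ i, z i : ℕ) : ℤ) = h ∧ coneGen z = y := by
  obtain ⟨q, hq⟩ := hy5
  obtain ⟨h1, h2, h3, h4, h5, h6, h7⟩ := hy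
  refine ⟨![(h - (y 0 + y 1 + y 2 + y 3 + y 4 - y 5)).toNat, (y 0 - q).toNat, (y 1 - q).toNat,
    (y 2).toNat, (y 3).toNat, (y 4 - 999 * q).toNat, q.toNat], ?_, ?_⟩
  · simp only [Fin.sum_univ_seven, Matrix.cons_val, Fin.isValue, Nat.cast_add, Int.ofNat_toNat]
    omega
  · funext i
    fin_cases i <;>
      simp only [coneGen, Matrix.cons_val, Fin.isValue, Fin.zero_eta, Fin.mk_one, Fin.reduceFinMk,
        Int.ofNat_toNat] <;> omega

lemma exists_latticePt_eq {n : ℕ} {x : Fin 6 → ℤ} (hx : InDilatedP (n : ℤ) x) :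
    ∃ ω, latticePt n ω = x := by
  by_cases hx5 : 1000 ∣ x 5
  · obtain ⟨z, hz, rfl⟩ := exists_coneGen_eq hx hx5
    exact ⟨.inl ⟨z, by omega⟩, rfl⟩
  · obtain ⟨h1, h2, h3, h4, h5, h6, h7⟩ := hx
    have hy : InDilatedP ((n : ℤ) - 2) (x - boxPt (x 5 % 1000)) := by
      simp only [InDilatedP, boxPt, Pi.sub_apply, Matrix.cons_val]
      omega
    obtain ⟨z, hz, hzx⟩ := exists_coneGen_eq hy <| by
      simp only [boxPt, Pi.sub_apply, Matrix.cons_val, Fin.isValue]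
      omega
    refine ⟨.inr (⟨(x 5 % 1000 - 1).toNat, by omega⟩, ⟨z, by omega⟩), ?_⟩
    have hr : ((x 5 % 1000 - 1).toNat : ℤ) + 1 = x 5 % 1000 := by omega
    simp only [latticePt, hzx, hr, add_sub_cancel]

instance finite_subtype_sum_eq (α : Type*) [Fintype α] (M : ℕ) :
    Finite {z : α → ℕ // ∑ i, z i = M} := by
  classical
  exact Finite.of_equiv _ (Sym.equivNatSumOfFintype α M)

instance finite_subtype_sum_add_eq (α : Type*) [Fintype α] (c M : ℕ) :
    Finite {z : α → ℕ // ∑ i, z i + c = M} :=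
  Finite.of_injective
    (fun z => (⟨z.1, by have := z.2; omega⟩ : {w : α → ℕ // ∑ i, w i = M - c}))
    fun _ _ h => Subtype.ext (by simpa only [Subtype.mk.injEq] using h)

lemma natCard_fin_succ_sum_eq (k M : ℕ) :
    Nat.card {z : Fin (k + 1) → ℕ // ∑ i, z i = M} = (M + k).choose k := by
  classical
  rw [← Nat.card_congr (Sym.equivNatSumOfFintype (Fin (k + 1)) M), Sym.natCard_sym_eq_choose,
    Nat.card_eq_fintype_card, Fintype.card_fin, add_right_comm, Nat.add_sub_cancel,
    add_comm k, Nat.choose_symm_add]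

lemma natCard_fin_seven_sum_add_two_eq (n : ℕ) :
    Nat.card {z : Fin 7 → ℕ // ∑ i, z i + 2 = n} = (n + 4).choose 6 := by
  rcases lt_or_ge n 2 with hn | hn
  · have : IsEmpty {z : Fin 7 → ℕ // ∑ i, z i + 2 = n} := ⟨fun z => by have := z.2; omega⟩
    rw [Nat.card_of_isEmpty, Nat.choose_eq_zero_of_lt (by omega)]
  · rw [Nat.card_congr (Equiv.subtypeEquivRight fun (z : Fin 7 → ℕ) =>
      (by omega : ∑ i, z i + 2 = n ↔ ∑ i, z i = n - 2)), natCard_fin_succ_sum_eq,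
      show n - 2 + 6 = n + 4 by omega]

lemma ncard_setOf_inDilatedP (n : ℕ) :
    {x : Fin 6 → ℤ | InDilatedP (n : ℤ) x}.ncard = (n + 6).choose 6 + 999 * (n + 4).choose 6 := by
  have hrange : {x : Fin 6 → ℤ | InDilatedP (n : ℤ) x} = Set.range (latticePt n) :=
    Set.ext fun x =>
      ⟨exists_latticePt_eq, by rintro ⟨ω, rfl⟩; exact inDilatedP_latticePt n ω⟩
  rw [hrange, Set.ncard_range_of_injective (latticePt_injective n), Nat.card_sum, Nat.card_prod,
    natCard_fin_succ_sum_eq, natCard_fin_seven_sum_add_two_eq, Nat.card_fin]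

lemma cast_choose_six {K : Type*} [Field K] [CharZero K] (a : ℕ) :
    (a.choose 6 : K) = a * (a - 1) * (a - 2) * (a - 3) * (a - 4) * (a - 5) / 720 := by
  rw [Nat.cast_choose_eq_descPochhammer_div]
  simp [descPochhammer_succ_right, Nat.factorial]

theorem ehrhart_of_P6_12 (n : ℕ) (hn : 0 < n) :
    (Set.ncard {x : Fin 6 → ℤ | (fun i => (x i : ℝ)) ∈
        (n : ℝ) • convexHull ℝ
          ({![0, 0, 0, 0, 0, 0], ![1, 0, 0, 0, 0, 0], ![0, 1, 0, 0, 0, 0],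
            ![0, 0, 1, 0, 0, 0], ![0, 0, 0, 1, 0, 0], ![0, 0, 0, 0, 1, 0],
            ![1, 1, 0, 0, 999, 1000]} : Set (Fin 6 → ℝ))} : ℚ)
      = 25 / 18 * n ^ 6 + 751 / 60 * n ^ 5 + 2515 / 72 * n ^ 4 + 131 / 6 * n ^ 3
        - 2435 / 72 * n ^ 2 - 617 / 20 * n + 1 := by
  rw [setOf_intCast_mem_smul_convexHull_verticesP hn, ncard_setOf_inDilatedP]
  push_cast
  rw [cast_choose_six, cast_choose_six]
  push_cast
  ring
end
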